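/- arXiv:2304.07034 — 9 statements merged into one kernel-verified Lean document; each statement's English description precedes it below -/
import Mathlib

section
/- (Sufficiency, regular case of the optimality conditions.) Suppose L*, U* ⊆ H are disjoint with L* ∪ U* ⊊ H, and they satisfy L* = {h ∈ H : s(L*,U*) ≤ m_h/A_h} and U* = {h ∈ H : s(L*,U*) ≥ M_h/A_h}. Then the vector x^{(L*,U*)} is feasible for Problem 1 and minimizes f(x) = ∑_{h∈H} A_h²/x_h over all feasible vectors of Problem 1. -/
open Finset

/-- Feasibility for Problem 1. -/
def Feas1 {ι : Type*} (H : Finset ι) (m M : ι → ℝ) (n : ℝ) (x : ι → ℝ) : Prop :=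
  (∀ h ∈ H, 0 < x h) ∧ (∑ h ∈ H, x h = n) ∧ ∀ h ∈ H, m h ≤ x h ∧ x h ≤ M h

/-- The objective function of Problem 1. -/
noncomputable def obj {ι : Type*} (H : Finset ι) (A : ι → ℝ) (x : ι → ℝ) : ℝ :=
  ∑ h ∈ H, (A h) ^ 2 / x h

/-- The set function `s(L,U) = (n − ∑_{h∈L} m_h − ∑_{h∈U} M_h) / ∑_{h∈H\(L∪U)} A_h`. -/
noncomputable def sLU {ι : Type*} [DecidableEq ι] (H : Finset ι) (A m M : ι → ℝ) (n : ℝ)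
    (L U : Finset ι) : ℝ :=
  (n - ∑ h ∈ L, m h - ∑ h ∈ U, M h) / ∑ h ∈ H \ (L ∪ U), A h

/-- The allocation `x^{(L,U)}`: `m_h` on `L`, `M_h` on `U`, `A_h · s(L,U)` elsewhere. -/
noncomputable def xLU {ι : Type*} [DecidableEq ι] (H : Finset ι) (A m M : ι → ℝ) (n : ℝ)
    (L U : Finset ι) (h : ι) : ℝ :=
  if h ∈ L then m h else if h ∈ U then M h else A h * sLU H A m M n L U

/-!
With the multiplier `λ = s(L,U)⁻²`, the point `x = x^(L,U)` satisfies the KKT conditions of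
Problem 1: the marginal cost `A_h²/x_h²` equals `λ` off `L ∪ U`, is at most `λ` on `L` (where
`A_h s ≤ m_h = x_h`) and at least `λ` on `U`. By convexity of `t ↦ A_h²/t`, every feasible `y`
then satisfies `A_h²/y_h - A_h²/x_h ≥ λ (x_h - y_h)` coordinatewise, and summing gives
`f(y) - f(x) ≥ λ (∑ x_h - ∑ y_h) = 0`.
-/

lemma sq_div_tangent_le {a x y : ℝ} (hx : 0 < x) (hy : 0 < y) :
    a ^ 2 / x ^ 2 * (x - y) ≤ a ^ 2 / y - a ^ 2 / x := by
  have key : a ^ 2 / y - a ^ 2 / x - a ^ 2 / x ^ 2 * (x - y)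
      = a ^ 2 * (x - y) ^ 2 / (x ^ 2 * y) := by
    field_simp
  linarith [show 0 ≤ a ^ 2 * (x - y) ^ 2 / (x ^ 2 * y) by positivity]

/-- The tangent-line bound at `x`, with the slope `-a²/x²` replaced by the slope `-s⁻²` of
`t ↦ a²/t` at `a s`; the sign condition makes the replacement weaken the bound. -/
lemma inv_sq_mul_sub_le_sq_div_sub_sq_div {a s x y : ℝ} (ha : 0 ≤ a) (hs : 0 < s) (hx : 0 < x)
    (hy : 0 < y) (hxy : 0 ≤ (x - y) * (a * s - x)) :
    (s ^ 2)⁻¹ * (x - y) ≤ a ^ 2 / y - a ^ 2 / x := by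
  have key : a ^ 2 / x ^ 2 * (x - y) - (s ^ 2)⁻¹ * (x - y)
      = (x - y) * (a * s - x) * (a * s + x) / (x ^ 2 * s ^ 2) := by
    field_simp
    ring
  have : 0 ≤ (x - y) * (a * s - x) * (a * s + x) / (x ^ 2 * s ^ 2) :=
    div_nonneg (mul_nonneg hxy (by positivity)) (by positivity)
  linarith [sq_div_tangent_le (a := a) hx hy]

lemma Finset.sum_le_sum_of_multiplier {ι : Type*} {H : Finset ι} {g : ι → ℝ → ℝ} {x y : ι → ℝ}
    (c : ℝ) (hsum : ∑ h ∈ H, x h = ∑ h ∈ H, y h)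
    (hle : ∀ h ∈ H, c * (x h - y h) ≤ g h (y h) - g h (x h)) :
    ∑ h ∈ H, g h (x h) ≤ ∑ h ∈ H, g h (y h) := by
  have := sum_le_sum hle
  rw [← mul_sum, sum_sub_distrib, sum_sub_distrib, hsum] at this
  linarith

section Allocation

variable {ι : Type*} [DecidableEq ι] {H : Finset ι} {A m M : ι → ℝ} {n : ℝ} {L U : Finset ι}
  {h : ι}

lemma xLU_of_mem_left (hL : h ∈ L) : xLU H A m M n L U h = m h := if_pos hL

lemma xLU_of_mem_right (hL : h ∉ L) (hU : h ∈ U) : xLU H A m M n L U h = M h := by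
  simp only [xLU, if_neg hL, if_pos hU]

lemma xLU_of_notMem_union (hLU : h ∉ L ∪ U) :
    xLU H A m M n L U h = A h * sLU H A m M n L U := by
  rw [mem_union, not_or] at hLU
  simp only [xLU, if_neg hLU.1, if_neg hLU.2]

lemma sum_xLU (hLU : L ∪ U ⊆ H) (hdisj : Disjoint L U) (hA : ∑ h ∈ H \ (L ∪ U), A h ≠ 0) :
    ∑ h ∈ H, xLU H A m M n L U h = n := by
  have hL : ∑ h ∈ L, xLU H A m M n L U h = ∑ h ∈ L, m h :=
    sum_congr rfl fun h hh => xLU_of_mem_left hh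
  have hU : ∑ h ∈ U, xLU H A m M n L U h = ∑ h ∈ U, M h :=
    sum_congr rfl fun h hh => xLU_of_mem_right (disjoint_right.mp hdisj hh) hh
  have hrest : ∑ h ∈ H \ (L ∪ U), xLU H A m M n L U h = n - ∑ h ∈ L, m h - ∑ h ∈ U, M h := by
    rw [sum_congr rfl fun h hh => xLU_of_notMem_union (mem_sdiff.mp hh).2, ← sum_mul, sLU,
      mul_div_cancel₀ _ hA]
  rw [← sum_sdiff hLU, sum_union hdisj, hL, hU, hrest]
  ring

lemma mem_left_iff_mul_sLU_le (hLfix : ∀ h, h ∈ L ↔ h ∈ H ∧ sLU H A m M n L U ≤ m h / A h)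
    (hA : ∀ h ∈ H, 0 < A h) (hH : h ∈ H) : h ∈ L ↔ A h * sLU H A m M n L U ≤ m h := by
  rw [hLfix, le_div_iff₀ (hA h hH), mul_comm, and_iff_right hH]

lemma mem_right_iff_le_mul_sLU (hUfix : ∀ h, h ∈ U ↔ h ∈ H ∧ M h / A h ≤ sLU H A m M n L U)
    (hA : ∀ h ∈ H, 0 < A h) (hH : h ∈ H) : h ∈ U ↔ M h ≤ A h * sLU H A m M n L U := by
  rw [hUfix, div_le_iff₀ (hA h hH), mul_comm, and_iff_right hH]

lemma sLU_pos (hLfix : ∀ h, h ∈ L ↔ h ∈ H ∧ sLU H A m M n L U ≤ m h / A h)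
    (hA : ∀ h ∈ H, 0 < A h) (hm : ∀ h ∈ H, 0 < m h) (hne : (H \ (L ∪ U)).Nonempty) :
    0 < sLU H A m M n L U := by
  obtain ⟨h, hh⟩ := hne
  obtain ⟨hH, hLU⟩ := mem_sdiff.mp hh
  have hL : h ∉ L := fun hL => hLU (mem_union_left U hL)
  have hlt := not_le.mp (mt (mem_left_iff_mul_sLU_le hLfix hA hH).2 hL)
  exact pos_of_mul_pos_right ((hm h hH).trans hlt) (hA h hH).le

lemma xLU_trichotomy (hLfix : ∀ h, h ∈ L ↔ h ∈ H ∧ sLU H A m M n L U ≤ m h / A h)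
    (hUfix : ∀ h, h ∈ U ↔ h ∈ H ∧ M h / A h ≤ sLU H A m M n L U)
    (hA : ∀ h ∈ H, 0 < A h) (hH : h ∈ H) :
    (xLU H A m M n L U h = m h ∧ A h * sLU H A m M n L U ≤ m h) ∨
    (xLU H A m M n L U h = M h ∧ M h ≤ A h * sLU H A m M n L U) ∨
    (xLU H A m M n L U h = A h * sLU H A m M n L U ∧
      m h < A h * sLU H A m M n L U ∧ A h * sLU H A m M n L U < M h) := by
  have hLiff := mem_left_iff_mul_sLU_le hLfix hA hH
  have hUiff := mem_right_iff_le_mul_sLU hUfix hA hH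
  by_cases hL : h ∈ L
  · exact Or.inl ⟨xLU_of_mem_left hL, hLiff.1 hL⟩
  by_cases hU : h ∈ U
  · exact Or.inr (Or.inl ⟨xLU_of_mem_right hL hU, hUiff.1 hU⟩)
  exact Or.inr (Or.inr ⟨xLU_of_notMem_union (by simp [hL, hU]),
    not_le.mp (mt hLiff.2 hL), not_le.mp (mt hUiff.2 hU)⟩)

lemma xLU_mem_Icc (hLfix : ∀ h, h ∈ L ↔ h ∈ H ∧ sLU H A m M n L U ≤ m h / A h)
    (hUfix : ∀ h, h ∈ U ↔ h ∈ H ∧ M h / A h ≤ sLU H A m M n L U)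
    (hA : ∀ h ∈ H, 0 < A h) (hmM : ∀ h ∈ H, m h < M h) (hH : h ∈ H) :
    m h ≤ xLU H A m M n L U h ∧ xLU H A m M n L U h ≤ M h := by
  have := hmM h hH
  rcases xLU_trichotomy hLfix hUfix hA hH with ⟨hx, -⟩ | ⟨hx, -⟩ | ⟨hx, hlow, hup⟩ <;>
    rw [hx] <;> constructor <;> linarith

lemma sub_mul_sub_xLU_nonneg (hLfix : ∀ h, h ∈ L ↔ h ∈ H ∧ sLU H A m M n L U ≤ m h / A h)
    (hUfix : ∀ h, h ∈ U ↔ h ∈ H ∧ M h / A h ≤ sLU H A m M n L U)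
    (hA : ∀ h ∈ H, 0 < A h) (hH : h ∈ H) {t : ℝ} (ht : m h ≤ t ∧ t ≤ M h) :
    0 ≤ (xLU H A m M n L U h - t) * (A h * sLU H A m M n L U - xLU H A m M n L U h) := by
  rcases xLU_trichotomy hLfix hUfix hA hH with ⟨hx, hle⟩ | ⟨hx, hle⟩ | ⟨hx, -⟩ <;> rw [hx]
  · exact mul_nonneg_of_nonpos_of_nonpos (by linarith) (by linarith)
  · exact mul_nonneg (by linarith) (by linarith)
  · simp

end Allocation

theorem optimality_sufficiency_regular_general {ι : Type*} [DecidableEq ι] (H : Finset ι)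
    (A m M : ι → ℝ) (n : ℝ)
    (hA : ∀ h ∈ H, 0 < A h) (hm : ∀ h ∈ H, 0 < m h) (hmM : ∀ h ∈ H, m h < M h)
    (L U : Finset ι) (hLH : L ⊆ H) (hUH : U ⊆ H) (hdisj : Disjoint L U)
    (hproper : L ∪ U ⊂ H)
    (hLfix : ∀ h, h ∈ L ↔ h ∈ H ∧ sLU H A m M n L U ≤ m h / A h)
    (hUfix : ∀ h, h ∈ U ↔ h ∈ H ∧ M h / A h ≤ sLU H A m M n L U) :
    Feas1 H m M n (xLU H A m M n L U) ∧
      ∀ y, Feas1 H m M n y → obj H A (xLU H A m M n L U) ≤ obj H A y := by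
  have hne : (H \ (L ∪ U)).Nonempty := sdiff_nonempty.mpr hproper.2
  have hs := sLU_pos hLfix hA hm hne
  have hAsum : ∑ h ∈ H \ (L ∪ U), A h ≠ 0 :=
    (sum_pos (fun h hh => hA h (mem_sdiff.mp hh).1) hne).ne'
  have hbounds h (hH : h ∈ H) := xLU_mem_Icc hLfix hUfix hA hmM hH
  have hx : Feas1 H m M n (xLU H A m M n L U) :=
    ⟨fun h hH => (hm h hH).trans_le (hbounds h hH).1,
      sum_xLU (union_subset hLH hUH) hdisj hAsum, hbounds⟩
  refine ⟨hx, fun y hy => ?_⟩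
  exact sum_le_sum_of_multiplier (g := fun h t => A h ^ 2 / t) (sLU H A m M n L U ^ 2)⁻¹
    (hx.2.1.trans hy.2.1.symm) fun h hH =>
      inv_sq_mul_sub_le_sq_div_sub_sq_div (hA h hH).le hs (hx.1 h hH) (hy.1 h hH)
        (sub_mul_sub_xLU_nonneg hLfix hUfix hA hH (hy.2.2 h hH))

/-- Sufficiency, regular case of the optimality conditions: if disjoint `L*, U* ⊆ H` with
`L* ∪ U* ⊊ H` satisfy the fixed-point conditions, then `x^{(L*,U*)}` is feasible and optimal
for Problem 1. -/
theorem optimality_sufficiency_regular {ι : Type*} [DecidableEq ι] (H : Finset ι)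
    (hH : H.Nonempty) (A m M : ι → ℝ) (n : ℝ)
    (hA : ∀ h ∈ H, 0 < A h) (hm : ∀ h ∈ H, 0 < m h) (hmM : ∀ h ∈ H, m h < M h)
    (hn₁ : ∑ h ∈ H, m h ≤ n) (hn₂ : n ≤ ∑ h ∈ H, M h)
    (L U : Finset ι) (hLH : L ⊆ H) (hUH : U ⊆ H) (hdisj : Disjoint L U)
    (hproper : L ∪ U ⊂ H)
    (hLfix : ∀ h, h ∈ L ↔ h ∈ H ∧ sLU H A m M n L U ≤ m h / A h)
    (hUfix : ∀ h, h ∈ U ↔ h ∈ H ∧ M h / A h ≤ sLU H A m M n L U) :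
    Feas1 H m M n (xLU H A m M n L U) ∧
      ∀ y, Feas1 H m M n y → obj H A (xLU H A m M n L U) ≤ obj H A y :=
  optimality_sufficiency_regular_general H A m M n hA hm hmM L U hLH hUH hdisj hproper hLfix hUfix
end

section
/- (Sufficiency, vertex case of the optimality conditions.) Suppose L*, U* ⊆ H are disjoint with L* ∪ U* = H, such that ∑_{h∈L*} m_h + ∑_{h∈U*} M_h = n, and, in case both L* and U* are nonempty, max_{h∈U*} M_h/A_h ≤ min_{h∈L*} m_h/A_h. Then the vector x* defined by x*_h = m_h for h ∈ L* and x*_h = M_h for h ∈ U* is feasible for Problem 1 and minimizes f(x) = ∑_{h∈H} A_h²/x_h over all feasible vectors of Problem 1. -/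
/-!
The objective is a sum of convex functions `t ↦ A²/t`, so it suffices to exhibit a Lagrange
multiplier `c` for the constraint `∑ x = n` satisfying the KKT sign conditions at the vertex:
`(A/m)² ≤ c` on `L*`, where the lower bound is active, and `c ≤ (A/M)²` on `U*`, where the upper
bound is active. Such a `c` exists precisely because `max_{U*} M/A ≤ min_{L*} m/A`.
-/

open Finset

theorem exists_separating_of_forall_le {α β : Type*} [LinearOrder β] [Nonempty β]
    {L U : Finset α} {f g : α → β} (hfg : ∀ l ∈ L, ∀ u ∈ U, f l ≤ g u) :
    ∃ c, (∀ l ∈ L, f l ≤ c) ∧ ∀ u ∈ U, c ≤ g u := by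
  rcases L.eq_empty_or_nonempty with rfl | hL
  · obtain ⟨c, hc⟩ := (U.image g).bddBelow
    exact ⟨c, by simp, fun u hu => hc (mem_coe.2 (mem_image_of_mem g hu))⟩
  · exact ⟨L.sup' hL f, fun l hl => le_sup' f hl,
      fun u hu => sup'_le hL f fun l hl => hfg l hl u hu⟩

theorem sq_div_le_sq_div_of_div_le {a b x y : ℝ} (hb : 0 < b) (hy : 0 < y)
    (h : y / b ≤ x / a) : (a / x) ^ 2 ≤ (b / y) ^ 2 := by
  have hxa : a / x = (x / a)⁻¹ := (inv_div x a).symm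
  have hyb : b / y = (y / b)⁻¹ := (inv_div y b).symm
  have hyb_pos : 0 < y / b := div_pos hy hb
  rw [hxa, hyb]
  exact pow_le_pow_left₀ (inv_nonneg.2 (hyb_pos.le.trans h)) (inv_anti₀ hyb_pos h) 2

theorem sq_div_mul_sub_le (a : ℝ) {x y : ℝ} (hx : 0 < x) (hy : 0 < y) :
    (a / x) ^ 2 * (x - y) ≤ a ^ 2 / y - a ^ 2 / x := by
  have hgap : a ^ 2 / y - a ^ 2 / x - (a / x) ^ 2 * (x - y) = a ^ 2 * (x - y) ^ 2 / (x ^ 2 * y) := by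
    field_simp
  have hgap_nonneg : 0 ≤ a ^ 2 * (x - y) ^ 2 / (x ^ 2 * y) := by positivity
  linarith

theorem sum_mul_sub_nonneg_of_multiplier {ι : Type*} {s : Finset ι} {g x y : ι → ℝ} (c : ℝ)
    (hxy : ∑ i ∈ s, x i = ∑ i ∈ s, y i) (hc : ∀ i ∈ s, 0 ≤ (g i - c) * (x i - y i)) :
    0 ≤ ∑ i ∈ s, g i * (x i - y i) := by
  have hsplit : ∑ i ∈ s, g i * (x i - y i)
      = ∑ i ∈ s, (g i - c) * (x i - y i) + c * ∑ i ∈ s, (x i - y i) := by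
    rw [mul_sum, ← sum_add_distrib]
    exact sum_congr rfl fun i _ => by ring
  rw [hsplit, sum_sub_distrib, hxy, sub_self, mul_zero, add_zero]
  exact sum_nonneg hc

theorem obj_le_obj_of_multiplier {ι : Type*} {H : Finset ι} {A x y : ι → ℝ}
    (hx : ∀ h ∈ H, 0 < x h) (hy : ∀ h ∈ H, 0 < y h) (hxy : ∑ h ∈ H, x h = ∑ h ∈ H, y h) (c : ℝ)
    (hc : ∀ h ∈ H, 0 ≤ ((A h / x h) ^ 2 - c) * (x h - y h)) :
    obj H A x ≤ obj H A y := by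
  have hgap : obj H A y - obj H A x = ∑ h ∈ H, (A h ^ 2 / y h - A h ^ 2 / x h) :=
    (sum_sub_distrib _ _).symm
  have htangent : ∑ h ∈ H, (A h / x h) ^ 2 * (x h - y h) ≤ obj H A y - obj H A x :=
    hgap ▸ sum_le_sum fun h hh => sq_div_mul_sub_le (A h) (hx h hh) (hy h hh)
  linarith [sum_mul_sub_nonneg_of_multiplier c hxy hc]

theorem feas1_vertex {ι : Type*} [DecidableEq ι] {L U : Finset ι} {m M : ι → ℝ} {n : ℝ}
    (hdisj : Disjoint L U) (hm : ∀ h ∈ L ∪ U, 0 < m h) (hmM : ∀ h ∈ L ∪ U, m h < M h)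
    (hsum : ∑ h ∈ L, m h + ∑ h ∈ U, M h = n) :
    Feas1 (L ∪ U) m M n (fun h => if h ∈ L then m h else M h) := by
  refine ⟨fun h hh => ?_, ?_, fun h hh => ?_⟩
  · beta_reduce
    split_ifs
    exacts [hm h hh, (hm h hh).trans (hmM h hh)]
  · rw [sum_union hdisj, ← hsum]
    congr 1
    · exact sum_congr rfl fun h hh => if_pos hh
    · exact sum_congr rfl fun h hh => if_neg (disjoint_right.1 hdisj hh)
  · beta_reduce
    split_ifs
    exacts [⟨le_rfl, (hmM h hh).le⟩, ⟨(hmM h hh).le, le_rfl⟩]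

theorem optimality_sufficiency_vertex_general {ι : Type*} [DecidableEq ι] (H : Finset ι)
    (A m M : ι → ℝ) (n : ℝ)
    (hA : ∀ h ∈ H, 0 < A h) (hm : ∀ h ∈ H, 0 < m h) (hmM : ∀ h ∈ H, m h < M h)
    (L U : Finset ι) (hdisj : Disjoint L U) (hcover : L ∪ U = H)
    (hsum : ∑ h ∈ L, m h + ∑ h ∈ U, M h = n)
    (hmaxmin : ∀ hu ∈ U, ∀ hl ∈ L, M hu / A hu ≤ m hl / A hl) :
    Feas1 H m M n (fun h => if h ∈ L then m h else M h) ∧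
      ∀ y, Feas1 H m M n y →
        obj H A (fun h => if h ∈ L then m h else M h) ≤ obj H A y := by
  subst hcover
  have hfeas := feas1_vertex hdisj hm hmM hsum
  obtain ⟨c, hcL, hcU⟩ := exists_separating_of_forall_le (f := fun h => (A h / m h) ^ 2)
    (g := fun h => (A h / M h) ^ 2) fun l hl u hu =>
      sq_div_le_sq_div_of_div_le (hA u (mem_union_right L hu))
        ((hm u (mem_union_right L hu)).trans (hmM u (mem_union_right L hu))) (hmaxmin u hu l hl)
  refine ⟨hfeas, fun y hy => obj_le_obj_of_multiplier hfeas.1 hy.1 (hfeas.2.1.trans hy.2.1.symm)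
    c fun h hh => ?_⟩
  obtain ⟨hmy, hyM⟩ := hy.2.2 h hh
  by_cases hL : h ∈ L
  · simp only [if_pos hL]
    exact mul_nonneg_of_nonpos_of_nonpos (by linarith [hcL h hL]) (by linarith)
  · have hU : h ∈ U := (mem_union.1 hh).resolve_left hL
    simp only [if_neg hL]
    exact mul_nonneg (by linarith [hcU h hU]) (by linarith)

/-- Sufficiency, vertex case of the optimality conditions: if disjoint `L*, U*` cover `H`,
`∑_{L*} m + ∑_{U*} M = n`, and (when both are nonempty) `max_{U*} M_h/A_h ≤ min_{L*} m_h/A_h`,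
then the vertex allocation (`m` on `L*`, `M` on `U*`) is feasible and optimal for Problem 1. -/
theorem optimality_sufficiency_vertex {ι : Type*} [DecidableEq ι] (H : Finset ι)
    (hH : H.Nonempty) (A m M : ι → ℝ) (n : ℝ)
    (hA : ∀ h ∈ H, 0 < A h) (hm : ∀ h ∈ H, 0 < m h) (hmM : ∀ h ∈ H, m h < M h)
    (hn₁ : ∑ h ∈ H, m h ≤ n) (hn₂ : n ≤ ∑ h ∈ H, M h)
    (L U : Finset ι) (hdisj : Disjoint L U) (hcover : L ∪ U = H)
    (hsum : ∑ h ∈ L, m h + ∑ h ∈ U, M h = n)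
    (hmaxmin : ∀ hu ∈ U, ∀ hl ∈ L, M hu / A hu ≤ m hl / A hl) :
    Feas1 H m M n (fun h => if h ∈ L then m h else M h) ∧
      ∀ y, Feas1 H m M n y →
        obj H A (fun h => if h ∈ L then m h else M h) ≤ obj H A y :=
  optimality_sufficiency_vertex_general H A m M n hA hm hmM L U hdisj hcover hsum hmaxmin
end

section
/- (Necessity of the optimality conditions.) If x* minimizes f(x) = ∑_{h∈H} A_h²/x_h over all feasible vectors of Problem 1, then there exist disjoint sets L*, U* ⊆ H such that x* = x^{(L*,U*)} and one of the following holds: (CASE I) L* ∪ U* ⊊ H, L* = {h ∈ H : s(L*,U*) ≤ m_h/A_h} and U* = {h ∈ H : s(L*,U*) ≥ M_h/A_h}; or (CASE II) L* ∪ U* = H, ∑_{h∈L*} m_h + ∑_{h∈U*} M_h = n, and, if both L* and U* are nonempty, max_{h∈U*} M_h/A_h ≤ min_{h∈L*} m_h/A_h. -/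
/-!
Moving a small amount `ε` from a stratum `h` with `x h > m h` to a stratum `g` with `x g < M g`
changes `f` by `ε (A_h² / x_h² - A_g² / x_g²) + o(ε)`, so at a minimiser `x h / A h ≤ x g / A g`.
If some stratum `h₀` lies strictly between its bounds, `s = x h₀ / A h₀` therefore separates the
ratios: `s ≤ x h / A h` whenever `x h < M h`, and `x h / A h ≤ s` whenever `m h < x h`. With `L`, `U`
the strata at their lower and upper bounds, every other `x h` equals `A h * s`, summing gives
`s = s(L,U)`, and the separation property is exactly the description of `L` and `U` in CASE I.
If no stratum is strictly inside its bounds, `L ∪ U = H` and the exchange inequality between a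
stratum of `U` and one of `L` is CASE II.
-/

open Finset

open Filter Topology

theorem eventually_sq_div_add_sq_div_lt {a b u v : ℝ} (ha : 0 < a) (hb : 0 < b) (hu : 0 < u)
    (hv : 0 < v) (hlt : u / a < v / b) :
    ∀ᶠ ε in 𝓝[>] 0, a ^ 2 / (u + ε) + b ^ 2 / (v - ε) < a ^ 2 / u + b ^ 2 / v := by
  set φ : ℝ → ℝ := fun ε => a ^ 2 / (u * (u + ε)) - b ^ 2 / (v * (v - ε))
  have hφ : ContinuousAt φ 0 := by
    fun_prop (disch := simp [hu.ne', hv.ne'])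
  have hφ0 : 0 < φ 0 := by
    have hbu : u * b < v * a := by rwa [div_lt_div_iff₀ ha hb] at hlt
    simp only [φ, add_zero, sub_zero, sub_pos]
    rw [div_lt_div_iff₀ (by positivity) (by positivity)]
    nlinarith [mul_pos hb hu]
  have hsmall : ∀ᶠ ε in 𝓝 (0 : ℝ), 0 < φ ε ∧ ε < v :=
    (hφ.eventually (lt_mem_nhds hφ0)).and (gt_mem_nhds hv)
  filter_upwards [nhdsWithin_le_nhds hsmall, self_mem_nhdsWithin] with ε ⟨hφε, hεv⟩ (hε : 0 < ε)
  have hvε : 0 < v - ε := sub_pos.mpr hεv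
  have hgain : a ^ 2 / u + b ^ 2 / v - (a ^ 2 / (u + ε) + b ^ 2 / (v - ε)) = ε * φ ε := by
    simp only [φ]
    field_simp
    ring
  linarith [mul_pos hε hφε]

section OptimalityConditions

variable {ι : Type*} {H : Finset ι} {A m M : ι → ℝ} {n : ℝ} {x : ι → ℝ}

noncomputable def lowerActive (H : Finset ι) (m x : ι → ℝ) : Finset ι :=
  H.filter fun h => x h = m h

noncomputable def upperActive (H : Finset ι) (M x : ι → ℝ) : Finset ι :=
  H.filter fun h => x h = M h

theorem disjoint_lowerActive_upperActive (hmM : ∀ h ∈ H, m h < M h) :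
    Disjoint (lowerActive H m x) (upperActive H M x) := by
  refine disjoint_left.mpr fun h hL hU => ?_
  rw [lowerActive, mem_filter] at hL
  rw [upperActive, mem_filter] at hU
  linarith [hmM h hL.1, hL.2, hU.2]

def IsRatioThreshold (H : Finset ι) (A m M x : ι → ℝ) (s : ℝ) : Prop :=
  ∀ h ∈ H, (x h < M h → s ≤ x h / A h) ∧ (m h < x h → x h / A h ≤ s)

namespace IsRatioThreshold

variable {s : ℝ}

theorem eq_mul (hs : IsRatioThreshold H A m M x s) {h : ι} (hh : h ∈ H) (hA : 0 < A h)
    (hlo : m h < x h) (hhi : x h < M h) : x h = A h * s := by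
  rw [mul_comm, ← div_eq_iff hA.ne']
  exact ((hs h hh).2 hlo).antisymm ((hs h hh).1 hhi)

theorem mem_lowerActive_iff (hs : IsRatioThreshold H A m M x s) (hA : ∀ h ∈ H, 0 < A h)
    (hmM : ∀ h ∈ H, m h < M h) (hx : Feas1 H m M n x) (h : ι) :
    h ∈ lowerActive H m x ↔ h ∈ H ∧ s ≤ m h / A h := by
  rw [lowerActive, mem_filter]
  constructor
  · rintro ⟨hh, hxm⟩
    exact ⟨hh, hxm ▸ (hs h hh).1 (hxm ▸ hmM h hh)⟩
  · rintro ⟨hh, hsm⟩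
    refine ⟨hh, by_contra fun hne => ?_⟩
    have hle := ((hs h hh).2 ((hx.2.2 h hh).1.lt_of_ne (Ne.symm hne))).trans hsm
    rw [div_le_div_iff_of_pos_right (hA h hh)] at hle
    exact hne (hle.antisymm (hx.2.2 h hh).1)

theorem mem_upperActive_iff (hs : IsRatioThreshold H A m M x s) (hA : ∀ h ∈ H, 0 < A h)
    (hmM : ∀ h ∈ H, m h < M h) (hx : Feas1 H m M n x) (h : ι) :
    h ∈ upperActive H M x ↔ h ∈ H ∧ M h / A h ≤ s := by
  rw [upperActive, mem_filter]
  constructor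
  · rintro ⟨hh, hxM⟩
    exact ⟨hh, hxM ▸ (hs h hh).2 (hxM ▸ hmM h hh)⟩
  · rintro ⟨hh, hMs⟩
    refine ⟨hh, by_contra fun hne => ?_⟩
    have hle := hMs.trans ((hs h hh).1 ((hx.2.2 h hh).2.lt_of_ne hne))
    rw [div_le_div_iff_of_pos_right (hA h hh)] at hle
    exact hne ((hx.2.2 h hh).2.antisymm hle)

end IsRatioThreshold

section DecidableEq

variable [DecidableEq ι]

def transfer (x : ι → ℝ) (g h : ι) (ε : ℝ) (k : ι) : ℝ :=
  if k = g then x g + ε else if k = h then x h - ε else x k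

theorem sum_transfer_sub_sum {g h : ι} (hg : g ∈ H) (hh : h ∈ H) (hgh : g ≠ h) (ε : ℝ)
    (F : ι → ℝ → ℝ) :
    ∑ k ∈ H, F k (transfer x g h ε k) - ∑ k ∈ H, F k (x k) =
      (F g (x g + ε) - F g (x g)) + (F h (x h - ε) - F h (x h)) := by
  rw [← sum_sub_distrib, sum_eq_add_of_mem g h hg hh hgh]
  · simp [transfer, hgh.symm]
  · rintro k - ⟨hkg, hkh⟩
    simp [transfer, hkg, hkh]

theorem Feas1.transfer (hx : Feas1 H m M n x) {g h : ι} (hg : g ∈ H) (hh : h ∈ H) (hgh : g ≠ h)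
    {ε : ℝ} (hε : 0 < ε) (hεg : x g + ε ≤ M g) (hεh : m h ≤ x h - ε) (hmh : 0 < m h) :
    Feas1 H m M n (transfer x g h ε) := by
  obtain ⟨hpos, hsum, hbd⟩ := hx
  refine ⟨fun k hk => ?_, ?_, fun k hk => ?_⟩
  · unfold _root_.transfer
    split_ifs
    · linarith [hpos g hg]
    · linarith
    · exact hpos k hk
  · linarith [sum_transfer_sub_sum (x := x) hg hh hgh ε fun _ t => t]
  · unfold _root_.transfer
    split_ifs with hkg hkh
    · subst hkg
      exact ⟨by linarith [(hbd k hk).1], hεg⟩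
    · subst hkh
      exact ⟨hεh, by linarith [(hbd k hk).2]⟩
    · exact hbd k hk

theorem obj_transfer_sub_obj {g h : ι} (hg : g ∈ H) (hh : h ∈ H) (hgh : g ≠ h) (ε : ℝ) :
    obj H A (transfer x g h ε) - obj H A x =
      (A g ^ 2 / (x g + ε) + A h ^ 2 / (x h - ε)) - (A g ^ 2 / x g + A h ^ 2 / x h) := by
  rw [obj, obj, sum_transfer_sub_sum hg hh hgh ε fun k t => A k ^ 2 / t]
  ring

theorem div_le_div_of_optimal (hA : ∀ h ∈ H, 0 < A h) (hm : ∀ h ∈ H, 0 < m h)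
    (hx : Feas1 H m M n x) (hopt : ∀ y, Feas1 H m M n y → obj H A x ≤ obj H A y) {g h : ι}
    (hg : g ∈ H) (hh : h ∈ H) (hxg : x g < M g) (hxh : m h < x h) :
    x h / A h ≤ x g / A g := by
  rcases eq_or_ne g h with rfl | hgh
  · rfl
  by_contra! hlt
  have hbetter : ∀ᶠ ε in 𝓝[>] 0,
      Feas1 H m M n (transfer x g h ε) ∧ obj H A (transfer x g h ε) < obj H A x := by
    have hroom : ∀ᶠ ε in 𝓝 (0 : ℝ), ε < M g - x g ∧ ε < x h - m h :=
      (gt_mem_nhds (sub_pos.mpr hxg)).and (gt_mem_nhds (sub_pos.mpr hxh))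
    filter_upwards [nhdsWithin_le_nhds hroom, self_mem_nhdsWithin,
      eventually_sq_div_add_sq_div_lt (hA g hg) (hA h hh) (hx.1 g hg) (hx.1 h hh) hlt]
      with ε ⟨hεg, hεh⟩ (hε : 0 < ε) hdec
    refine ⟨hx.transfer hg hh hgh hε (by linarith) (by linarith) (hm h hh), ?_⟩
    linarith [obj_transfer_sub_obj (A := A) (x := x) hg hh hgh ε]
  obtain ⟨ε, hfeas, hdec⟩ := hbetter.exists
  exact (hopt _ hfeas).not_gt hdec

theorem isRatioThreshold_of_optimal (hA : ∀ h ∈ H, 0 < A h) (hm : ∀ h ∈ H, 0 < m h)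
    (hx : Feas1 H m M n x) (hopt : ∀ y, Feas1 H m M n y → obj H A x ≤ obj H A y) {h₀ : ι}
    (hh₀ : h₀ ∈ H) (hlo₀ : m h₀ < x h₀) (hhi₀ : x h₀ < M h₀) :
    IsRatioThreshold H A m M x (x h₀ / A h₀) := fun _ hh =>
  ⟨fun hhi => div_le_div_of_optimal hA hm hx hopt hh hh₀ hhi hlo₀,
    fun hlo => div_le_div_of_optimal hA hm hx hopt hh₀ hh hhi₀ hlo⟩

theorem div_le_div_of_mem_upperActive_of_mem_lowerActive (hA : ∀ h ∈ H, 0 < A h)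
    (hm : ∀ h ∈ H, 0 < m h) (hmM : ∀ h ∈ H, m h < M h) (hx : Feas1 H m M n x)
    (hopt : ∀ y, Feas1 H m M n y → obj H A x ≤ obj H A y) {hu hl : ι}
    (hhu : hu ∈ upperActive H M x) (hhl : hl ∈ lowerActive H m x) :
    M hu / A hu ≤ m hl / A hl := by
  obtain ⟨huH, hxu⟩ := mem_filter.mp hhu
  obtain ⟨hlH, hxl⟩ := mem_filter.mp hhl
  have := div_le_div_of_optimal hA hm hx hopt hlH huH (hxl ▸ hmM hl hlH) (hxu ▸ hmM hu huH)
  rwa [hxl, hxu] at this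

theorem Feas1.mem_sdiff_active_iff (hx : Feas1 H m M n x) {h : ι} :
    h ∈ H \ (lowerActive H m x ∪ upperActive H M x) ↔ h ∈ H ∧ m h < x h ∧ x h < M h := by
  rw [Finset.mem_sdiff, Finset.mem_union, lowerActive, upperActive, mem_filter, mem_filter]
  constructor
  · rintro ⟨hh, hLU⟩
    simp only [not_or, not_and] at hLU
    exact ⟨hh, (hx.2.2 h hh).1.lt_of_ne (Ne.symm (hLU.1 hh)), (hx.2.2 h hh).2.lt_of_ne (hLU.2 hh)⟩
  · rintro ⟨hh, hlo, hhi⟩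
    simp [hh, hlo.ne', hhi.ne]

theorem sub_sum_sub_sum_eq_sum_sdiff {L U : Finset ι} (hLH : L ⊆ H) (hUH : U ⊆ H)
    (hLU : Disjoint L U) (hsum : ∑ h ∈ H, x h = n) (hL : ∀ h ∈ L, x h = m h)
    (hU : ∀ h ∈ U, x h = M h) :
    n - ∑ h ∈ L, m h - ∑ h ∈ U, M h = ∑ h ∈ H \ (L ∪ U), x h := by
  rw [← sum_congr rfl hL, ← sum_congr rfl hU, ← hsum, ← sum_sdiff (union_subset hLH hUH),
    sum_union hLU]
  ring

theorem sLU_eq_of_eq_mul {L U : Finset ι} (hLH : L ⊆ H) (hUH : U ⊆ H) (hLU : Disjoint L U)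
    (hsum : ∑ h ∈ H, x h = n) (hL : ∀ h ∈ L, x h = m h) (hU : ∀ h ∈ U, x h = M h) {s : ℝ}
    (hC : ∀ h ∈ H \ (L ∪ U), x h = A h * s) (hA : ∑ h ∈ H \ (L ∪ U), A h ≠ 0) :
    sLU H A m M n L U = s := by
  rw [sLU, sub_sum_sub_sum_eq_sum_sdiff hLH hUH hLU hsum hL hU, sum_congr rfl hC, ← sum_mul,
    mul_div_cancel_left₀ s hA]

theorem eq_xLU {L U : Finset ι} (hL : ∀ h ∈ L, x h = m h) (hU : ∀ h ∈ U, x h = M h)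
    (hC : ∀ h ∈ H \ (L ∪ U), x h = A h * sLU H A m M n L U) :
    ∀ h ∈ H, x h = xLU H A m M n L U h := by
  intro h hh
  unfold xLU
  split_ifs with hhL hhU
  · exact hL h hhL
  · exact hU h hhU
  · exact hC h (Finset.mem_sdiff.mpr ⟨hh, by simp [hhL, hhU]⟩)

end DecidableEq

end OptimalityConditions

theorem optimality_necessity_general {ι : Type*} [DecidableEq ι] (H : Finset ι)
    (A m M : ι → ℝ) (n : ℝ)
    (hA : ∀ h ∈ H, 0 < A h) (hm : ∀ h ∈ H, 0 < m h) (hmM : ∀ h ∈ H, m h < M h)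
    (x : ι → ℝ) (hfeas : Feas1 H m M n x)
    (hopt : ∀ y, Feas1 H m M n y → obj H A x ≤ obj H A y) :
    ∃ L U : Finset ι, L ⊆ H ∧ U ⊆ H ∧ Disjoint L U ∧
      (∀ h ∈ H, x h = xLU H A m M n L U h) ∧
      ((L ∪ U ⊂ H ∧
          (∀ h, h ∈ L ↔ h ∈ H ∧ sLU H A m M n L U ≤ m h / A h) ∧
          (∀ h, h ∈ U ↔ h ∈ H ∧ M h / A h ≤ sLU H A m M n L U)) ∨
        (L ∪ U = H ∧
          (∑ h ∈ L, m h + ∑ h ∈ U, M h = n) ∧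
          (∀ hu ∈ U, ∀ hl ∈ L, M hu / A hu ≤ m hl / A hl))) := by
  set L := lowerActive H m x
  set U := upperActive H M x
  have hLH : L ⊆ H := filter_subset _ _
  have hUH : U ⊆ H := filter_subset _ _
  have hxL : ∀ h ∈ L, x h = m h := fun h hh => (mem_filter.mp hh).2
  have hxU : ∀ h ∈ U, x h = M h := fun h hh => (mem_filter.mp hh).2
  have hdisj : Disjoint L U := disjoint_lowerActive_upperActive hmM
  refine ⟨L, U, hLH, hUH, hdisj, ?_⟩
  rcases (H \ (L ∪ U)).eq_empty_or_nonempty with hII | ⟨h₀, hh₀⟩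
  · refine ⟨eq_xLU hxL hxU (by simp [hII]), Or.inr ⟨?_, ?_, fun _ hhu _ hhl =>
      div_le_div_of_mem_upperActive_of_mem_lowerActive hA hm hmM hfeas hopt hhu hhl⟩⟩
    · exact (union_subset hLH hUH).antisymm (sdiff_eq_empty_iff_subset.mp hII)
    · have hres := sub_sum_sub_sum_eq_sum_sdiff hLH hUH hdisj hfeas.2.1 hxL hxU
      rw [hII, sum_empty] at hres
      linarith
  · obtain ⟨hh₀H, hlo₀, hhi₀⟩ := hfeas.mem_sdiff_active_iff.mp hh₀
    have hsep := isRatioThreshold_of_optimal hA hm hfeas hopt hh₀H hlo₀ hhi₀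
    have hC : ∀ h ∈ H \ (L ∪ U), x h = A h * (x h₀ / A h₀) := fun h hh => by
      obtain ⟨hhH, hlo, hhi⟩ := hfeas.mem_sdiff_active_iff.mp hh
      exact hsep.eq_mul hhH (hA h hhH) hlo hhi
    have hs : sLU H A m M n L U = x h₀ / A h₀ := sLU_eq_of_eq_mul hLH hUH hdisj hfeas.2.1 hxL hxU
      hC (sum_pos (fun h hh => hA h (Finset.mem_sdiff.mp hh).1) ⟨h₀, hh₀⟩).ne'
    refine ⟨eq_xLU hxL hxU (hs ▸ hC), Or.inl ⟨?_, ?_, ?_⟩⟩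
    · exact (ssubset_iff_of_subset (union_subset hLH hUH)).mpr ⟨h₀, Finset.mem_sdiff.mp hh₀⟩
    · rw [hs]
      exact hsep.mem_lowerActive_iff hA hmM hfeas
    · rw [hs]
      exact hsep.mem_upperActive_iff hA hmM hfeas

/-- Necessity of the optimality conditions: any optimal solution `x*` of Problem 1 equals
`x^{(L*,U*)}` on `H` for some disjoint `L*, U* ⊆ H` satisfying CASE I (regular) or
CASE II (vertex). -/
theorem optimality_necessity {ι : Type*} [DecidableEq ι] (H : Finset ι)
    (hH : H.Nonempty) (A m M : ι → ℝ) (n : ℝ)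
    (hA : ∀ h ∈ H, 0 < A h) (hm : ∀ h ∈ H, 0 < m h) (hmM : ∀ h ∈ H, m h < M h)
    (hn₁ : ∑ h ∈ H, m h ≤ n) (hn₂ : n ≤ ∑ h ∈ H, M h)
    (x : ι → ℝ) (hfeas : Feas1 H m M n x)
    (hopt : ∀ y, Feas1 H m M n y → obj H A x ≤ obj H A y) :
    ∃ L U : Finset ι, L ⊆ H ∧ U ⊆ H ∧ Disjoint L U ∧
      (∀ h ∈ H, x h = xLU H A m M n L U h) ∧
      ((L ∪ U ⊂ H ∧
          (∀ h, h ∈ L ↔ h ∈ H ∧ sLU H A m M n L U ≤ m h / A h) ∧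
          (∀ h, h ∈ U ↔ h ∈ H ∧ M h / A h ≤ sLU H A m M n L U)) ∨
        (L ∪ U = H ∧
          (∑ h ∈ L, m h + ∑ h ∈ U, M h = n) ∧
          (∀ hu ∈ U, ∀ hl ∈ L, M hu / A hu ≤ m hl / A hl))) :=
  optimality_necessity_general H A m M n hA hm hmM x hfeas hopt
end

section
/- If disjoint sets L*, U* ⊆ H with L* ∪ U* ⊊ H satisfy L* = {h ∈ H : s(L*,U*) ≤ m_h/A_h} and U* = {h ∈ H : s(L*,U*) ≥ M_h/A_h}, then s(L*,U*) > 0. -/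
/-!
If `s(L*, U*) ≤ 0`, no stratum can satisfy `M_h / A_h ≤ s(L*, U*)`, so `U* = ∅`; the numerator
of `s(L*, ∅)` is then `n - ∑_{L*} m_h ≥ ∑_{H \ L*} m_h > 0`, a contradiction.
-/

open Finset

lemma sLU_empty_pos {ι : Type*} [DecidableEq ι] {H L : Finset ι} {A m : ι → ℝ} (M : ι → ℝ)
    {n : ℝ} (hA : ∀ h ∈ H, 0 < A h) (hm : ∀ h ∈ H, 0 < m h) (hn : ∑ h ∈ H, m h ≤ n)
    (hL : L ⊂ H) : 0 < sLU H A m M n L ∅ := by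
  obtain ⟨i, hiH, hiL⟩ := exists_of_ssubset hL
  have hnum : ∑ h ∈ L, m h < n :=
    (sum_lt_sum_of_subset hL.subset hiH hiL (hm i hiH) fun j hj _ => (hm j hj).le).trans_le hn
  have hden : 0 < ∑ h ∈ H \ L, A h :=
    sum_pos (fun j hj => hA j (mem_sdiff.1 hj).1) ⟨i, mem_sdiff.2 ⟨hiH, hiL⟩⟩
  simp only [sLU, union_empty, sum_empty, sub_zero]
  exact div_pos (sub_pos.2 hnum) hden

theorem s_pos_of_fixed_point_general {ι : Type*} [DecidableEq ι] (H : Finset ι) (A m M : ι → ℝ) (n : ℝ)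
    (hA : ∀ h ∈ H, 0 < A h) (hm : ∀ h ∈ H, 0 < m h) (hmM : ∀ h ∈ H, m h < M h)
    (hn₁ : ∑ h ∈ H, m h ≤ n) (L U : Finset ι) (hproper : L ∪ U ⊂ H)
    (hUfix : ∀ h, h ∈ U ↔ h ∈ H ∧ M h / A h ≤ sLU H A m M n L U) :
    0 < sLU H A m M n L U := by
  by_contra! hs
  have hU : U = ∅ := eq_empty_of_forall_notMem fun u hu => by
    obtain ⟨huH, hle⟩ := (hUfix u).1 hu
    have : 0 < M u / A u := div_pos ((hm u huH).trans (hmM u huH)) (hA u huH)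
    linarith
  subst hU
  exact hs.not_gt (sLU_empty_pos M hA hm hn₁ (by simpa using hproper))

/-- If disjoint `L*, U* ⊆ H` with `L* ∪ U* ⊊ H` satisfy the regular-case fixed-point
conditions, then `s(L*,U*) > 0`. -/
theorem s_pos_of_fixed_point {ι : Type*} [DecidableEq ι] (H : Finset ι)
    (hH : H.Nonempty) (A m M : ι → ℝ) (n : ℝ)
    (hA : ∀ h ∈ H, 0 < A h) (hm : ∀ h ∈ H, 0 < m h) (hmM : ∀ h ∈ H, m h < M h)
    (hn₁ : ∑ h ∈ H, m h ≤ n) (hn₂ : n ≤ ∑ h ∈ H, M h)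
    (L U : Finset ι) (hLH : L ⊆ H) (hUH : U ⊆ H) (hdisj : Disjoint L U)
    (hproper : L ∪ U ⊂ H)
    (hLfix : ∀ h, h ∈ L ↔ h ∈ H ∧ sLU H A m M n L U ≤ m h / A h)
    (hUfix : ∀ h, h ∈ U ↔ h ∈ H ∧ M h / A h ≤ sLU H A m M n L U) :
    0 < sLU H A m M n L U :=
  s_pos_of_fixed_point_general H A m M n hA hm hmM hn₁ L U hproper hUfix
end

section
/- (Monotonicity of the set function s, part 1.) Let A ⊆ B ⊆ H and C ⊆ D ⊆ H with B ∪ D ⊊ H and B ∩ D = ∅. Then s(A,C) ≥ s(B,D) if and only if s(A,C)·(∑_{h∈B\A} A_h + ∑_{h∈D\C} A_h) ≤ ∑_{h∈B\A} m_h + ∑_{h∈D\C} M_h. -/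
open Finset

/-! Passing from `(SA, SC)` to `(SB, SD)` removes `x = ∑_{SB\SA ∪ SD\SC} A_h` from the denominator
of `s` and `y = ∑_{SB\SA} m_h + ∑_{SD\SC} M_h` from its numerator, so the claim is the elementary
comparison `(a - y) / b ≤ a / (b + x) ↔ a / (b + x) * x ≤ y` for `b > 0`. -/

theorem sub_div_le_div_add_iff {𝕜 : Type*} [Field 𝕜] [LinearOrder 𝕜] [IsStrictOrderedRing 𝕜]
    {a b x y : 𝕜} (hb : 0 < b) (hbx : b + x ≠ 0) :
    (a - y) / b ≤ a / (b + x) ↔ a / (b + x) * x ≤ y := by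
  have ha : a = a / (b + x) * b + a / (b + x) * x := by
    rw [← mul_add, div_mul_cancel₀ a hbx]
  rw [div_le_iff₀ hb]
  constructor <;> intro h <;> linarith

theorem sum_sdiff_union_eq_add {ι M : Type*} [DecidableEq ι] [AddCommGroup M] {H A B C D : Finset ι}
    (hAB : A ⊆ B) (hCD : C ⊆ D) (hBD : B ∪ D ⊆ H) (hdisj : Disjoint B D) (f : ι → M) :
    ∑ h ∈ H \ (A ∪ C), f h = ∑ h ∈ H \ (B ∪ D), f h + (∑ h ∈ B \ A, f h + ∑ h ∈ D \ C, f h) := by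
  have hAC : A ∪ C ⊆ H := (union_subset_union hAB hCD).trans hBD
  have hdisjAC : Disjoint A C := (hdisj.mono_left hAB).mono_right hCD
  rw [sum_sdiff_eq_sub hAC, sum_sdiff_eq_sub hBD, sum_sdiff_eq_sub hAB, sum_sdiff_eq_sub hCD,
    sum_union hdisj, sum_union hdisjAC]
  abel

theorem s_monotonicity_part1_general {ι : Type*} [DecidableEq ι] (H : Finset ι)
    (A m M : ι → ℝ) (n : ℝ)
    (hA : ∀ h ∈ H, 0 < A h)
    (SA SB SC SD : Finset ι)
    (hAB : SA ⊆ SB) (hCD : SC ⊆ SD)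
    (hBD : SB ∪ SD ⊂ H) (hdisj : Disjoint SB SD) :
    sLU H A m M n SA SC ≥ sLU H A m M n SB SD ↔
      sLU H A m M n SA SC * (∑ h ∈ SB \ SA, A h + ∑ h ∈ SD \ SC, A h) ≤
        ∑ h ∈ SB \ SA, m h + ∑ h ∈ SD \ SC, M h := by
  have hBDH : SB ∪ SD ⊆ H := hBD.subset
  have hrest : 0 < ∑ h ∈ H \ (SB ∪ SD), A h :=
    sum_pos (fun h hh => hA h (mem_sdiff.mp hh).1) (sdiff_nonempty.mpr (not_subset_of_ssubset hBD))
  have hgap : 0 ≤ ∑ h ∈ SB \ SA, A h + ∑ h ∈ SD \ SC, A h := by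
    refine add_nonneg (sum_nonneg fun h hh => (hA h ?_).le) (sum_nonneg fun h hh => (hA h ?_).le)
    · exact hBDH (mem_union_left _ (mem_sdiff.mp hh).1)
    · exact hBDH (mem_union_right _ (mem_sdiff.mp hh).1)
  have hnum : n - ∑ h ∈ SB, m h - ∑ h ∈ SD, M h =
      (n - ∑ h ∈ SA, m h - ∑ h ∈ SC, M h) - (∑ h ∈ SB \ SA, m h + ∑ h ∈ SD \ SC, M h) := by
    rw [sum_sdiff_eq_sub hAB, sum_sdiff_eq_sub hCD]
    ring
  rw [ge_iff_le, sLU, sLU, hnum, sum_sdiff_union_eq_add hAB hCD hBDH hdisj A]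
  exact sub_div_le_div_add_iff hrest (by linarith)

/-- Monotonicity of the set function `s`, part 1: for `A ⊆ B ⊆ H`, `C ⊆ D ⊆ H` with
`B ∪ D ⊊ H` and `B ∩ D = ∅`,
`s(A,C) ≥ s(B,D)  ↔  s(A,C)·(∑_{B\A} A_h + ∑_{D\C} A_h) ≤ ∑_{B\A} m_h + ∑_{D\C} M_h`. -/
theorem s_monotonicity_part1 {ι : Type*} [DecidableEq ι] (H : Finset ι) (hH : H.Nonempty)
    (A m M : ι → ℝ) (n : ℝ)
    (hA : ∀ h ∈ H, 0 < A h) (hm : ∀ h ∈ H, 0 < m h) (hmM : ∀ h ∈ H, m h < M h)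
    (hn₁ : ∑ h ∈ H, m h ≤ n) (hn₂ : n ≤ ∑ h ∈ H, M h)
    (SA SB SC SD : Finset ι)
    (hAB : SA ⊆ SB) (hBH : SB ⊆ H) (hCD : SC ⊆ SD) (hDH : SD ⊆ H)
    (hBD : SB ∪ SD ⊂ H) (hdisj : Disjoint SB SD) :
    sLU H A m M n SA SC ≥ sLU H A m M n SB SD ↔
      sLU H A m M n SA SC * (∑ h ∈ SB \ SA, A h + ∑ h ∈ SD \ SC, A h) ≤
        ∑ h ∈ SB \ SA, m h + ∑ h ∈ SD \ SC, M h :=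
  s_monotonicity_part1_general H A m M n hA SA SB SC SD hAB hCD hBD hdisj
end

section
/- (Monotonicity of the set function s, part 2.) Let A ⊆ B ⊆ H and C ⊆ D ⊆ H with A ∪ D ⊊ H, A ∩ D = ∅, B ∪ C ⊊ H and B ∩ C = ∅. Then s(A,D) ≥ s(B,C) if and only if s(A,D)·(∑_{h∈B\A} A_h − ∑_{h∈D\C} A_h) ≤ ∑_{h∈B\A} m_h − ∑_{h∈D\C} M_h. -/
open Finset

/-! Writing `s(L,U) = N(L,U) / T(L,U)`, both differences in the statement are differences of the
numerators and denominators: `∑_{B\A} m - ∑_{D\C} M = N(A,D) - N(B,C)` and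
`∑_{B\A} A - ∑_{D\C} A = T(A,D) - T(B,C)`. The claim is then the identity
`c/d ≤ a/b ↔ a/b · (b - d) ≤ a - c` for positive denominators. -/

theorem div_le_div_iff_div_mul_sub_le_sub {K : Type*} [Field K] [LinearOrder K]
    [IsStrictOrderedRing K] {a b c d : K} (hb : b ≠ 0) (hd : 0 < d) :
    c / d ≤ a / b ↔ a / b * (b - d) ≤ a - c := by
  rw [div_le_iff₀ hd, mul_sub, div_mul_cancel₀ a hb]
  exact (sub_le_sub_iff_left a).symm

theorem Finset.sum_sdiff_pos_of_ssubset {ι M : Type*} [DecidableEq ι] [AddCommMonoid M]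
    [PartialOrder M] [IsOrderedCancelAddMonoid M] {H s : Finset ι} {f : ι → M}
    (hf : ∀ i ∈ H, 0 < f i) (hs : s ⊂ H) : 0 < ∑ i ∈ H \ s, f i :=
  sum_pos (fun i hi => hf i (mem_sdiff.mp hi).1) (sdiff_nonempty.mpr hs.2)

theorem Finset.sum_sdiff_union_eq_sub {ι M : Type*} [DecidableEq ι] [AddCommGroup M]
    {H L U : Finset ι} (f : ι → M) (hLU : L ∪ U ⊆ H) (hdisj : Disjoint L U) :
    ∑ i ∈ H \ (L ∪ U), f i = ∑ i ∈ H, f i - ∑ i ∈ L, f i - ∑ i ∈ U, f i := by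
  rw [sum_sdiff_eq_sub hLU, sum_union hdisj, sub_sub]

theorem s_monotonicity_part2_general {ι : Type*} [DecidableEq ι] (H : Finset ι)
    (A m M : ι → ℝ) (n : ℝ)
    (hA : ∀ h ∈ H, 0 < A h)
    (SA SB SC SD : Finset ι)
    (hAB : SA ⊆ SB) (hCD : SC ⊆ SD)
    (hAD : SA ∪ SD ⊂ H) (hADdisj : Disjoint SA SD)
    (hBC : SB ∪ SC ⊂ H) (hBCdisj : Disjoint SB SC) :
    sLU H A m M n SA SD ≥ sLU H A m M n SB SC ↔
      sLU H A m M n SA SD * (∑ h ∈ SB \ SA, A h - ∑ h ∈ SD \ SC, A h) ≤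
        ∑ h ∈ SB \ SA, m h - ∑ h ∈ SD \ SC, M h := by
  have hden : ∑ h ∈ SB \ SA, A h - ∑ h ∈ SD \ SC, A h =
      ∑ h ∈ H \ (SA ∪ SD), A h - ∑ h ∈ H \ (SB ∪ SC), A h := by
    rw [sum_sdiff_eq_sub hAB, sum_sdiff_eq_sub hCD, sum_sdiff_union_eq_sub A hAD.1 hADdisj,
      sum_sdiff_union_eq_sub A hBC.1 hBCdisj]
    abel
  have hnum : ∑ h ∈ SB \ SA, m h - ∑ h ∈ SD \ SC, M h =
      (n - ∑ h ∈ SA, m h - ∑ h ∈ SD, M h) - (n - ∑ h ∈ SB, m h - ∑ h ∈ SC, M h) := by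
    rw [sum_sdiff_eq_sub hAB, sum_sdiff_eq_sub hCD]
    abel
  rw [hden, hnum, ge_iff_le]
  exact div_le_div_iff_div_mul_sub_le_sub (sum_sdiff_pos_of_ssubset hA hAD).ne'
    (sum_sdiff_pos_of_ssubset hA hBC)

/-- Monotonicity of the set function `s`, part 2: for `A ⊆ B ⊆ H`, `C ⊆ D ⊆ H` with
`A ∪ D ⊊ H`, `A ∩ D = ∅`, `B ∪ C ⊊ H`, `B ∩ C = ∅`,
`s(A,D) ≥ s(B,C)  ↔  s(A,D)·(∑_{B\A} A_h − ∑_{D\C} A_h) ≤ ∑_{B\A} m_h − ∑_{D\C} M_h`. -/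
theorem s_monotonicity_part2 {ι : Type*} [DecidableEq ι] (H : Finset ι) (hH : H.Nonempty)
    (A m M : ι → ℝ) (n : ℝ)
    (hA : ∀ h ∈ H, 0 < A h) (hm : ∀ h ∈ H, 0 < m h) (hmM : ∀ h ∈ H, m h < M h)
    (hn₁ : ∑ h ∈ H, m h ≤ n) (hn₂ : n ≤ ∑ h ∈ H, M h)
    (SA SB SC SD : Finset ι)
    (hAB : SA ⊆ SB) (hBH : SB ⊆ H) (hCD : SC ⊆ SD) (hDH : SD ⊆ H)
    (hAD : SA ∪ SD ⊂ H) (hADdisj : Disjoint SA SD)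
    (hBC : SB ∪ SC ⊂ H) (hBCdisj : Disjoint SB SC) :
    sLU H A m M n SA SD ≥ sLU H A m M n SB SC ↔
      sLU H A m M n SA SD * (∑ h ∈ SB \ SA, A h - ∑ h ∈ SD \ SC, A h) ≤
        ∑ h ∈ SB \ SA, m h - ∑ h ∈ SD \ SC, M h :=
  s_monotonicity_part2_general H A m M n hA SA SB SC SD hAB hCD hAD hADdisj hBC hBCdisj
end

section
/- (Optimality conditions for the one-sided problem.) Problem 2 has a unique optimal solution. Moreover, a vector x* = (x*_h, h ∈ H) with all x*_h > 0 minimizes f(x) = ∑_{h∈H} A_h²/x_h subject to ∑_{h∈H} x*_h = n and x*_h ≤ M_h for all h ∈ H, if and only if there exists U* ⊆ H such that x*_h = M_h for h ∈ U* and x*_h = A_h·s(∅,U*) for h ∈ H\U*, where either (CASE I) U* ⊊ H and U* = {h ∈ H : A_h·s(∅,U*) ≥ M_h}, or (CASE II) U* = H and n = ∑_{h∈H} M_h. -/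
open Finset

/-- Feasibility for Problem 2 (one-sided, upper bounds only). -/
def Feas2 {ι : Type*} (H : Finset ι) (M : ι → ℝ) (n : ℝ) (x : ι → ℝ) : Prop :=
  (∀ h ∈ H, 0 < x h) ∧ (∑ h ∈ H, x h = n) ∧ ∀ h ∈ H, x h ≤ M h

/-- `s(∅,U) = (n − ∑_{h∈U} M_h) / ∑_{h∈H\U} A_h`. -/
noncomputable def sU {ι : Type*} [DecidableEq ι] (H : Finset ι) (A M : ι → ℝ) (n : ℝ)
    (U : Finset ι) : ℝ :=
  (n - ∑ h ∈ U, M h) / ∑ h ∈ H \ U, A h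

/-! The objective is convex, so a feasible `x` is a minimizer as soon as the first-order
condition `∑ A_h²/x_h² (x_h - y_h) ≥ 0` holds against every feasible `y`; strict convexity of
`t ↦ c²/t` makes it the unique one. Both cases of the optimality conditions give the
first-order condition: off `U` the weights `A_h²/x_h²` all equal `1/s²`, on `U` they are
at least `1/s²` while `x_h - y_h = M_h - y_h ≥ 0`. A set `U` satisfying CASE I is found as a
fixed point of `U ↦ {h ∈ H : M_h ≤ A_h s(∅,U)}`: along this map `s(∅,U)` does not decrease,
so starting from `∅` the sets increase, and a largest set satisfying the invariant of the
iteration is a fixed point. -/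

section ConvexBound

variable {ι : Type*} {H : Finset ι} {A x y : ι → ℝ}

lemma sq_div_sub_tangent_eq {a b : ℝ} (c : ℝ) (ha : a ≠ 0) (hb : b ≠ 0) :
    c ^ 2 / b - (c ^ 2 / a + c ^ 2 / a ^ 2 * (a - b)) = c ^ 2 * (a - b) ^ 2 / (a ^ 2 * b) := by
  field_simp
  ring

lemma sq_div_add_mul_sub_le (c : ℝ) {a b : ℝ} (ha : 0 < a) (hb : 0 < b) :
    c ^ 2 / a + c ^ 2 / a ^ 2 * (a - b) ≤ c ^ 2 / b := by
  have hgap := sq_div_sub_tangent_eq c ha.ne' hb.ne'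
  have : 0 ≤ c ^ 2 * (a - b) ^ 2 / (a ^ 2 * b) := by positivity
  linarith

lemma sq_div_add_mul_sub_lt {a b c : ℝ} (hc : c ≠ 0) (ha : 0 < a) (hb : 0 < b) (hab : a ≠ b) :
    c ^ 2 / a + c ^ 2 / a ^ 2 * (a - b) < c ^ 2 / b := by
  have hgap := sq_div_sub_tangent_eq c ha.ne' hb.ne'
  have : a - b ≠ 0 := sub_ne_zero.2 hab
  have : 0 < c ^ 2 * (a - b) ^ 2 / (a ^ 2 * b) := by positivity
  linarith

lemma obj_le_of_sum_mul_sub_nonneg (hx : ∀ h ∈ H, 0 < x h) (hy : ∀ h ∈ H, 0 < y h)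
    (hfirst : 0 ≤ ∑ h ∈ H, A h ^ 2 / x h ^ 2 * (x h - y h)) : obj H A x ≤ obj H A y :=
  calc obj H A x ≤ obj H A x + ∑ h ∈ H, A h ^ 2 / x h ^ 2 * (x h - y h) :=
        le_add_of_nonneg_right hfirst
    _ = ∑ h ∈ H, (A h ^ 2 / x h + A h ^ 2 / x h ^ 2 * (x h - y h)) := by
        rw [obj, sum_add_distrib]
    _ ≤ obj H A y := sum_le_sum fun h hh => sq_div_add_mul_sub_le _ (hx h hh) (hy h hh)

lemma eqOn_of_obj_le_of_sum_mul_sub_nonneg (hA : ∀ h ∈ H, A h ≠ 0) (hx : ∀ h ∈ H, 0 < x h)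
    (hy : ∀ h ∈ H, 0 < y h) (hfirst : 0 ≤ ∑ h ∈ H, A h ^ 2 / x h ^ 2 * (x h - y h))
    (hle : obj H A y ≤ obj H A x) : ∀ h ∈ H, y h = x h := by
  by_contra! ⟨h₀, hh₀, hne⟩
  have : obj H A x < obj H A y :=
    calc obj H A x ≤ obj H A x + ∑ h ∈ H, A h ^ 2 / x h ^ 2 * (x h - y h) :=
          le_add_of_nonneg_right hfirst
      _ = ∑ h ∈ H, (A h ^ 2 / x h + A h ^ 2 / x h ^ 2 * (x h - y h)) := by
          rw [obj, sum_add_distrib]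
      _ < obj H A y :=
          sum_lt_sum (fun h hh => sq_div_add_mul_sub_le _ (hx h hh) (hy h hh))
            ⟨h₀, hh₀,
              sq_div_add_mul_sub_lt (hA h₀ hh₀) (hx h₀ hh₀) (hy h₀ hh₀) hne.symm⟩
  linarith

end ConvexBound

section ActiveSet

variable {ι : Type*} [DecidableEq ι] {H U V : Finset ι} {A M x y : ι → ℝ} {n : ℝ}

def OptimalityConditions (H : Finset ι) (A M : ι → ℝ) (n : ℝ) (U : Finset ι)
    (x : ι → ℝ) : Prop :=
  U ⊆ H ∧ (∀ h ∈ U, x h = M h) ∧ (∀ h ∈ H \ U, x h = A h * sU H A M n U) ∧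
    ((U ⊂ H ∧ ∀ h, h ∈ U ↔ h ∈ H ∧ M h ≤ A h * sU H A M n U) ∨
      (U = H ∧ n = ∑ h ∈ H, M h))

lemma OptimalityConditions.congr (hU : OptimalityConditions H A M n U x)
    (hxy : ∀ h ∈ H, x h = y h) : OptimalityConditions H A M n U y := by
  obtain ⟨hUH, hxU, hxU', hcase⟩ := hU
  exact ⟨hUH, fun h hh => hxy h (hUH hh) ▸ hxU h hh,
    fun h hh => hxy h (mem_sdiff.1 hh).1 ▸ hxU' h hh, hcase⟩

lemma sum_mul_sub_nonneg_of_optimalityConditions (hA : ∀ h ∈ H, 0 < A h)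
    (hx : Feas2 H M n x) (hy : Feas2 H M n y) (hU : OptimalityConditions H A M n U x) :
    0 ≤ ∑ h ∈ H, A h ^ 2 / x h ^ 2 * (x h - y h) := by
  obtain ⟨hxpos, hxsum, -⟩ := hx
  obtain ⟨-, hysum, hyM⟩ := hy
  obtain ⟨-, hxU, hxU', ⟨hUH, hUact⟩ | ⟨rfl, -⟩⟩ := hU
  · set s := sU H A M n U
    obtain ⟨h₀, hh₀H, hh₀U⟩ := exists_of_ssubset hUH
    have hs : 0 < s := pos_of_mul_pos_right
      (hxU' h₀ (mem_sdiff.2 ⟨hh₀H, hh₀U⟩) ▸ hxpos h₀ hh₀H) (hA h₀ hh₀H).le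
    have hterm : ∀ h ∈ H, 1 / s ^ 2 * (x h - y h) ≤ A h ^ 2 / x h ^ 2 * (x h - y h) := by
      intro h hh
      by_cases hhU : h ∈ U
      · have hxM : x h = M h := hxU h hhU
        have hxs : x h ≤ A h * s := hxM ▸ ((hUact h).1 hhU).2
        have hweight : 1 / s ^ 2 ≤ A h ^ 2 / x h ^ 2 := by
          rw [div_le_div_iff₀ (by positivity) (pow_pos (hxpos h hh) 2)]
          nlinarith [hxpos h hh]
        exact mul_le_mul_of_nonneg_right hweight (by linarith [hyM h hh])
      · have hweight : A h ^ 2 / x h ^ 2 = 1 / s ^ 2 := by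
          rw [hxU' h (mem_sdiff.2 ⟨hh, hhU⟩)]
          field_simp [(hA h hh).ne']
        rw [hweight]
    calc (0 : ℝ) = 1 / s ^ 2 * ∑ h ∈ H, (x h - y h) := by
          rw [sum_sub_distrib, hxsum, hysum, sub_self, mul_zero]
      _ = ∑ h ∈ H, 1 / s ^ 2 * (x h - y h) := mul_sum _ _ _
      _ ≤ _ := sum_le_sum hterm
  · exact sum_nonneg fun h hh =>
      mul_nonneg (by positivity) (sub_nonneg.2 (hxU h hh ▸ hyM h hh))

lemma sum_sdiff_pos (hA : ∀ h ∈ H, 0 < A h) (hU : U ⊂ H) : 0 < ∑ h ∈ H \ U, A h :=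
  sum_pos (fun h hh => hA h (mem_sdiff.1 hh).1)
    (sdiff_nonempty.2 (not_subset_of_ssubset hU))

lemma sU_mul_sum_sdiff (hA : ∀ h ∈ H, 0 < A h) (hU : U ⊂ H) :
    sU H A M n U * ∑ h ∈ H \ U, A h = n - ∑ h ∈ U, M h :=
  div_mul_cancel₀ _ (sum_sdiff_pos hA hU).ne'

lemma sU_mul_sum_sdiff_le (hA : ∀ h ∈ H, 0 < A h) (hU : U ⊂ H) (hUV : U ⊆ V) (hVH : V ⊆ H)
    (hMV : ∀ h ∈ V \ U, M h ≤ A h * sU H A M n U) :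
    sU H A M n U * ∑ h ∈ H \ V, A h ≤ n - ∑ h ∈ V, M h := by
  have hM : ∑ h ∈ V \ U, M h ≤ sU H A M n U * ∑ h ∈ V \ U, A h := by
    rw [mul_sum]
    exact sum_le_sum fun h hh => (hMV h hh).trans_eq (mul_comm _ _)
  have hsU := sU_mul_sum_sdiff (M := M) (n := n) hA hU
  rw [sum_sdiff_eq_sub hU.subset] at hsU
  rw [sum_sdiff_eq_sub hVH, ← sum_sdiff hUV (f := M), ← sum_sdiff hUV (f := A)]
  linarith

noncomputable def activeSet (H : Finset ι) (A M : ι → ℝ) (n : ℝ) (U : Finset ι) :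
    Finset ι :=
  H.filter fun h => M h ≤ A h * sU H A M n U

/-- Invariant of the iteration `U ↦ activeSet U` started at `∅`. -/
def IsAdmissible (H : Finset ι) (A M : ι → ℝ) (n : ℝ) (U : Finset ι) : Prop :=
  U ⊂ H ∧ ∑ h ∈ U, M h < n ∧ U ⊆ activeSet H A M n U

lemma isAdmissible_activeSet (hA : ∀ h ∈ H, 0 < A h) (hlt : n < ∑ h ∈ H, M h)
    (hU : IsAdmissible H A M n U) : IsAdmissible H A M n (activeSet H A M n U) := by
  obtain ⟨hUH, hUM, hUV⟩ := hU
  set V := activeSet H A M n U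
  have hVH : V ⊆ H := filter_subset _ _
  have hMV : ∀ h ∈ V \ U, M h ≤ A h * sU H A M n U := fun h hh =>
    (mem_filter.1 (mem_sdiff.1 hh).1).2
  have hVH' : V ⊂ H := by
    refine Finset.ssubset_iff_subset_ne.2 ⟨hVH, fun hVeq => ?_⟩
    have := sU_mul_sum_sdiff_le (V := H) hA hUH (hVeq ▸ hUV) subset_rfl (hVeq ▸ hMV)
    rw [sdiff_self, bot_eq_empty, sum_empty, mul_zero] at this
    linarith
  have hs : 0 < sU H A M n U := div_pos (sub_pos.2 hUM) (sum_sdiff_pos hA hUH)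
  have hbudget := sU_mul_sum_sdiff_le hA hUH hUV hVH hMV
  have hDV := sum_sdiff_pos hA hVH'
  have hsV : sU H A M n U ≤ sU H A M n V := (le_div_iff₀ hDV).2 hbudget
  refine ⟨hVH', by nlinarith, fun h hh => mem_filter.2 ⟨hVH hh, ?_⟩⟩
  exact (mem_filter.1 hh).2.trans (mul_le_mul_of_nonneg_left hsV (hA h (hVH hh)).le)

lemma exists_isAdmissible_activeSet_eq (hH : H.Nonempty) (hA : ∀ h ∈ H, 0 < A h) (hn : 0 < n)
    (hlt : n < ∑ h ∈ H, M h) :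
    ∃ U, IsAdmissible H A M n U ∧ activeSet H A M n U = U := by
  classical
  have hempty : IsAdmissible H A M n ∅ :=
    ⟨hH.empty_ssubset, by simpa using hn, empty_subset _⟩
  obtain ⟨U, hUS, hUmax⟩ := exists_max_image (H.powerset.filter (IsAdmissible H A M n)) card
    ⟨∅, mem_filter.2 ⟨empty_mem_powerset _, hempty⟩⟩
  have hU := (mem_filter.1 hUS).2
  have hV := isAdmissible_activeSet hA hlt hU
  have hcard := hUmax _ (mem_filter.2 ⟨mem_powerset.2 hV.1.subset, hV⟩)
  exact ⟨U, hU, (eq_of_subset_of_card_le hU.2.2 hcard).symm⟩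

noncomputable def allocation (H : Finset ι) (A M : ι → ℝ) (n : ℝ) (U : Finset ι) :
    ι → ℝ :=
  fun h => if h ∈ U then M h else A h * sU H A M n U

lemma feas2_allocation (hA : ∀ h ∈ H, 0 < A h) (hM : ∀ h ∈ H, 0 < M h)
    (hU : IsAdmissible H A M n U) (hfix : activeSet H A M n U = U) :
    Feas2 H M n (allocation H A M n U) := by
  have hs : 0 < sU H A M n U := div_pos (sub_pos.2 hU.2.1) (sum_sdiff_pos hA hU.1)
  refine ⟨fun h hh => ?_, ?_, fun h hh => ?_⟩
  · unfold allocation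
    split_ifs
    · exact hM h hh
    · exact mul_pos (hA h hh) hs
  · have hoff : ∑ h ∈ H \ U, allocation H A M n U h = sU H A M n U * ∑ h ∈ H \ U, A h := by
      rw [mul_sum]
      exact sum_congr rfl fun h hh => (if_neg (mem_sdiff.1 hh).2).trans (mul_comm _ _)
    have hon : ∑ h ∈ U, allocation H A M n U h = ∑ h ∈ U, M h :=
      sum_congr rfl fun h hh => if_pos hh
    rw [← sum_sdiff hU.1.subset, hoff, hon, sU_mul_sum_sdiff hA hU.1, sub_add_cancel]
  · unfold allocation
    split_ifs with hhU
    · exact le_rfl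
    · have : h ∉ activeSet H A M n U := hfix.symm ▸ hhU
      exact (not_le.1 fun hle => this (mem_filter.2 ⟨hh, hle⟩)).le

lemma optimalityConditions_allocation (hU : IsAdmissible H A M n U)
    (hfix : activeSet H A M n U = U) :
    OptimalityConditions H A M n U (allocation H A M n U) :=
  ⟨hU.1.subset, fun _ hh => if_pos hh, fun _ hh => if_neg (mem_sdiff.1 hh).2,
    Or.inl ⟨hU.1, fun h => (Finset.ext_iff.1 hfix h).symm.trans mem_filter⟩⟩

lemma exists_feas2_optimalityConditions (hH : H.Nonempty) (hA : ∀ h ∈ H, 0 < A h)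
    (hM : ∀ h ∈ H, 0 < M h) (hn₁ : 0 < n) (hn₂ : n ≤ ∑ h ∈ H, M h) :
    ∃ U x, Feas2 H M n x ∧ OptimalityConditions H A M n U x := by
  rcases hn₂.eq_or_lt with heq | hlt
  · exact ⟨H, M, ⟨hM, heq.symm, fun _ _ => le_rfl⟩, subset_rfl, fun _ _ => rfl,
      fun _ hh => absurd (mem_sdiff.1 hh).1 (mem_sdiff.1 hh).2, Or.inr ⟨rfl, heq⟩⟩
  · obtain ⟨U, hU, hfix⟩ := exists_isAdmissible_activeSet_eq hH hA hn₁ hlt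
    exact ⟨U, _, feas2_allocation hA hM hU hfix, optimalityConditions_allocation hU hfix⟩

end ActiveSet

/-- Optimality conditions for the one-sided Problem 2: the problem has a unique optimal
solution, and a feasible vector is optimal iff it is of the form `M_h` on `U*`,
`A_h · s(∅,U*)` off `U*`, where either (CASE I) `U* ⊊ H` and
`U* = {h ∈ H : A_h·s(∅,U*) ≥ M_h}`, or (CASE II) `U* = H` and `n = ∑_{h∈H} M_h`. -/
theorem problem2_optimality_conditions {ι : Type*} [DecidableEq ι] (H : Finset ι)
    (hH : H.Nonempty) (A M : ι → ℝ) (n : ℝ)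
    (hA : ∀ h ∈ H, 0 < A h) (hM : ∀ h ∈ H, 0 < M h)
    (hn₁ : 0 < n) (hn₂ : n ≤ ∑ h ∈ H, M h) :
    (∃ x : ι → ℝ, Feas2 H M n x ∧
      (∀ y, Feas2 H M n y → obj H A x ≤ obj H A y) ∧
      (∀ y, Feas2 H M n y → (∀ z, Feas2 H M n z → obj H A y ≤ obj H A z) →
        ∀ h ∈ H, y h = x h)) ∧
    (∀ x : ι → ℝ, Feas2 H M n x →
      ((∀ y, Feas2 H M n y → obj H A x ≤ obj H A y) ↔
        ∃ U : Finset ι, U ⊆ H ∧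
          (∀ h ∈ U, x h = M h) ∧
          (∀ h ∈ H \ U, x h = A h * sU H A M n U) ∧
          ((U ⊂ H ∧ ∀ h, h ∈ U ↔ h ∈ H ∧ M h ≤ A h * sU H A M n U) ∨
            (U = H ∧ n = ∑ h ∈ H, M h)))) := by
  have hmin : ∀ U x, Feas2 H M n x → OptimalityConditions H A M n U x →
      ∀ y, Feas2 H M n y → obj H A x ≤ obj H A y := fun U x hx hU y hy =>
    obj_le_of_sum_mul_sub_nonneg hx.1 hy.1
      (sum_mul_sub_nonneg_of_optimalityConditions hA hx hy hU)
  obtain ⟨U, xs, hxs, hU⟩ := exists_feas2_optimalityConditions hH hA hM hn₁ hn₂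
  have huniq : ∀ y, Feas2 H M n y → obj H A y ≤ obj H A xs → ∀ h ∈ H, y h = xs h :=
    fun y hy hle => eqOn_of_obj_le_of_sum_mul_sub_nonneg (fun h hh => (hA h hh).ne') hxs.1 hy.1
      (sum_mul_sub_nonneg_of_optimalityConditions hA hxs hy hU) hle
  refine ⟨⟨xs, hxs, hmin U xs hxs hU, fun y hy hymin => huniq y hy (hymin xs hxs)⟩,
    fun x hx => ⟨fun hxmin => ⟨U, ?_⟩, fun ⟨V, hV⟩ => hmin V x hx hV⟩⟩
  exact hU.congr fun h hh => (huniq x hx (hxmin xs hxs) h hh).symm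
end

section
/- (One-step monotonicity of the values s(L,U) in the RNABOX iteration.) Let L ⊊ H with 0 < n − ∑_{h∈L} m_h ≤ ∑_{h∈H\L} M_h, let x** be the unique optimal solution of Problem 2 on the index set H\L with budget n − ∑_{h∈L} m_h, and set U = {h ∈ H\L : x**_h = M_h} and L̃ = {h ∈ H\(L∪U) : x**_h ≤ m_h}. Assume L̃ ≠ ∅ and put L' = L ∪ L̃. Suppose 0 < n − ∑_{h∈L'} m_h ≤ ∑_{h∈H\L'} M_h, let x*** be the unique optimal solution of Problem 2 on the index set H\L' with budget n − ∑_{h∈L'} m_h, and set U' = {h ∈ H\L' : x***_h = M_h}. If L' ∪ U' ⊊ H, then s(L,U) ≥ s(L',U'). -/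
/-!
At an optimum of Problem 2 a stratum `g` strictly below its upper bound has the largest ratio
`x_g / A_g`: moving a little mass from any `h` onto `g` is feasible and, to first order, changes
the objective by `ε (A_h² / x_h² - A_g² / x_g²) ≥ 0`. Hence the optimum is `x_h = min(M_h, s A_h)`
with `s` the common ratio of the non-saturated strata, and summing gives `s = s(L,U)`.
If `s(L',U') > s(L,U)`, then `x*** ≥ x**` on `H \ L'`, strictly at a stratum not in `U'`; but
`x** ≤ m` on `L̃`, so `x***` spends at most what `x**` spends on `H \ L'`, a contradiction.
-/

open Finset

section

variable {ι : Type*}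

/-- `x` is an optimal solution of Problem 2 on `S` with budget `b`. -/
structure IsOptimalAllocation (S : Finset ι) (A M : ι → ℝ) (b : ℝ) (x : ι → ℝ) : Prop where
  pos : ∀ i ∈ S, 0 < x i
  sum_eq : ∑ i ∈ S, x i = b
  le_upper : ∀ i ∈ S, x i ≤ M i
  optimal : ∀ y : ι → ℝ, (∀ i ∈ S, 0 < y i) → ∑ i ∈ S, y i = b → (∀ i ∈ S, y i ≤ M i) →
    ∑ i ∈ S, A i ^ 2 / x i ≤ ∑ i ∈ S, A i ^ 2 / y i

theorem le_of_sum_min_mul_le {T : Finset ι} {A M : ι → ℝ} {t t' : ℝ}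
    (hA : ∀ i ∈ T, 0 < A i) {g : ι} (hg : g ∈ T) (hgM : t' * A g ≤ M g)
    (hsum : ∑ i ∈ T, min (M i) (t' * A i) ≤ ∑ i ∈ T, min (M i) (t * A i)) : t' ≤ t := by
  by_contra! htt'
  refine hsum.not_gt (sum_lt_sum (fun i hi => ?_) ⟨g, hg, ?_⟩)
  · exact min_le_min_left _ (mul_le_mul_of_nonneg_right htt'.le (hA i hi).le)
  · rw [min_eq_right hgM]
    exact (min_le_right _ _).trans_lt (mul_lt_mul_of_pos_right htt' (hA g hg))

section

variable [DecidableEq ι]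

theorem Finset.sum_sub_sum_eq_of_eq_off_pair {S : Finset ι} {g h : ι} (hg : g ∈ S)
    (hh : h ∈ S) (hgh : g ≠ h) {f f' : ι → ℝ} (heq : ∀ i, i ≠ g → i ≠ h → f' i = f i) :
    ∑ i ∈ S, f' i - ∑ i ∈ S, f i = (f' g - f g) + (f' h - f h) := by
  rw [← sum_sub_distrib, ← sum_pair hgh (f := fun i => f' i - f i)]
  refine (sum_subset (by simp [insert_subset_iff, hg, hh]) fun i _ hi => ?_).symm
  simp only [mem_insert, mem_singleton, not_or] at hi
  rw [heq i hi.1 hi.2, sub_self]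

namespace IsOptimalAllocation

variable {S : Finset ι} {A M x : ι → ℝ} {b : ℝ} {g h : ι}

theorem transfer_le (hx : IsOptimalAllocation S A M b x) (hg : g ∈ S) (hh : h ∈ S)
    (hgh : g ≠ h) {ε : ℝ} (hε : 0 < ε) (hεg : x g + ε ≤ M g) (hεh : ε < x h) :
    A g ^ 2 / (x g * (x g + ε)) ≤ A h ^ 2 / (x h * (x h - ε)) := by
  have hxg := hx.pos g hg
  have hxh := hx.pos h hh
  set y := Function.update (Function.update x h (x h - ε)) g (x g + ε)
  have hyg : y g = x g + ε := Function.update_self ..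
  have hyh : y h = x h - ε := by simp [y, hgh.symm]
  have hy : ∀ i, i ≠ g → i ≠ h → y i = x i := fun i hig hih => by simp [y, hig, hih]
  have hypos : ∀ i ∈ S, 0 < y i := by
    intro i hi
    by_cases hig : i = g
    · rw [hig, hyg]; linarith
    by_cases hih : i = h
    · rw [hih, hyh]; linarith
    rw [hy i hig hih]; exact hx.pos i hi
  have hyle : ∀ i ∈ S, y i ≤ M i := by
    intro i hi
    by_cases hig : i = g
    · rw [hig, hyg]; exact hεg
    by_cases hih : i = h
    · rw [hih, hyh]; linarith [hx.le_upper h hh]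
    rw [hy i hig hih]; exact hx.le_upper i hi
  have hysum : ∑ i ∈ S, y i = b := by
    have := sum_sub_sum_eq_of_eq_off_pair hg hh hgh hy
    rw [hyg, hyh, hx.sum_eq] at this
    linarith
  have hgain := sum_sub_sum_eq_of_eq_off_pair hg hh hgh
    (f := fun i => A i ^ 2 / x i) (f' := fun i => A i ^ 2 / y i) fun i hig hih => by
      simp only [hy i hig hih]
  have hlhs : A g ^ 2 / (x g + ε) - A g ^ 2 / x g = -(ε * (A g ^ 2 / (x g * (x g + ε)))) := by
    field_simp; ring
  have hrhs : A h ^ 2 / (x h - ε) - A h ^ 2 / x h = ε * (A h ^ 2 / (x h * (x h - ε))) := by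
    have : x h - ε ≠ 0 := by linarith
    field_simp; ring
  simp only [hyg, hyh, hlhs, hrhs] at hgain
  have := hx.optimal y hypos hysum hyle
  exact le_of_mul_le_mul_left (by linarith) hε

open Topology in
theorem div_le_div_of_lt_upper (hx : IsOptimalAllocation S A M b x) (hA : ∀ i ∈ S, 0 < A i)
    (hg : g ∈ S) (hh : h ∈ S) (hgM : x g < M g) : x h / A h ≤ x g / A g := by
  rcases eq_or_ne g h with rfl | hgh
  · rfl
  have hxg := hx.pos g hg
  have hxh := hx.pos h hh
  have hAg := hA g hg
  have hAh := hA h hh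
  have hlim : A g ^ 2 / (x g * (x g + 0)) ≤ A h ^ 2 / (x h * (x h - 0)) := by
    refine le_of_tendsto_of_tendsto (b := 𝓝[>] (0 : ℝ))
      (f := fun ε => A g ^ 2 / (x g * (x g + ε))) (g := fun ε => A h ^ 2 / (x h * (x h - ε)))
      ?_ ?_ ?_
    · exact (continuousAt_const.div (by fun_prop) (by positivity)).tendsto.mono_left
        nhdsWithin_le_nhds
    · exact (continuousAt_const.div (by fun_prop) (by rw [sub_zero]; positivity)).tendsto.mono_left
        nhdsWithin_le_nhds
    · filter_upwards [Ioo_mem_nhdsGT (lt_min (sub_pos.2 hgM) hxh)] with ε ⟨hε, hεδ⟩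
      exact hx.transfer_le hg hh hgh hε (by linarith [min_le_left (M g - x g) (x h)])
        (hεδ.trans_le (min_le_right _ _))
  rw [add_zero, sub_zero, div_le_div_iff₀ (by positivity) (by positivity)] at hlim
  have hsq : (x h * A g) ^ 2 ≤ (x g * A h) ^ 2 := by linarith
  rw [div_le_div_iff₀ hAh hAg]
  exact (pow_le_pow_iff_left₀ (by positivity) (by positivity) two_ne_zero).1 hsq

theorem div_eq_div_of_lt_upper (hx : IsOptimalAllocation S A M b x) (hA : ∀ i ∈ S, 0 < A i)
    (hg : g ∈ S) (hh : h ∈ S) (hgM : x g < M g) (hhM : x h < M h) : x h / A h = x g / A g :=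
  (hx.div_le_div_of_lt_upper hA hg hh hgM).antisymm (hx.div_le_div_of_lt_upper hA hh hg hhM)

theorem eq_min_of_lt_upper (hx : IsOptimalAllocation S A M b x) (hA : ∀ i ∈ S, 0 < A i)
    (hg : g ∈ S) (hgM : x g < M g) (hh : h ∈ S) : x h = min (M h) (x g / A g * A h) := by
  have hAh := hA h hh
  rcases (hx.le_upper h hh).eq_or_lt with hhM | hhM
  · rw [← hhM, min_eq_left]
    exact (div_le_iff₀ hAh).1 (hx.div_le_div_of_lt_upper hA hg hh hgM)
  · rw [← hx.div_eq_div_of_lt_upper hA hg hh hgM hhM, div_mul_cancel₀ _ hAh.ne',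
      min_eq_right hhM.le]

end IsOptimalAllocation

variable {H L U : Finset ι} {A m M x : ι → ℝ} {n : ℝ}

theorem mem_sdiff_and_lt_of_mem_sdiff_union (hU : ∀ i, i ∈ U ↔ i ∈ H \ L ∧ x i = M i)
    (hle : ∀ i ∈ H \ L, x i ≤ M i) {i : ι} (hi : i ∈ H \ (L ∪ U)) :
    i ∈ H \ L ∧ x i < M i := by
  simp only [mem_sdiff, mem_union, not_or] at hi
  have hiL : i ∈ H \ L := mem_sdiff.2 ⟨hi.1, hi.2.1⟩
  exact ⟨hiL, (hle i hiL).lt_of_ne fun hiM => hi.2.2 ((hU i).2 ⟨hiL, hiM⟩)⟩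

theorem sLU_eq_of_eq_mul_s12 {t : ℝ} (hUsub : U ⊆ H \ L)
    (hsum : ∑ i ∈ H \ L, x i = n - ∑ i ∈ L, m i) (hxU : ∀ i ∈ U, x i = M i)
    (hfree : ∀ i ∈ H \ (L ∪ U), x i = t * A i) (hA : ∑ i ∈ H \ (L ∪ U), A i ≠ 0) :
    sLU H A m M n L U = t := by
  have hnum : n - ∑ i ∈ L, m i - ∑ i ∈ U, M i = t * ∑ i ∈ H \ (L ∪ U), A i := by
    rw [← hsum, ← sum_congr rfl hxU, ← sum_sdiff_eq_sub hUsub, mul_sum, sdiff_sdiff_left]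
    exact sum_congr rfl hfree
  rw [sLU, hnum, mul_div_cancel_right₀ t hA]

theorem IsOptimalAllocation.sLU_eq (hx : IsOptimalAllocation (H \ L) A M (n - ∑ i ∈ L, m i) x)
    (hA : ∀ i ∈ H, 0 < A i) (hU : ∀ i, i ∈ U ↔ i ∈ H \ L ∧ x i = M i) {g : ι}
    (hg : g ∈ H \ (L ∪ U)) : sLU H A m M n L U = x g / A g := by
  have hAL : ∀ i ∈ H \ L, 0 < A i := fun i hi => hA i (mem_sdiff.1 hi).1
  obtain ⟨hgL, hgM⟩ := mem_sdiff_and_lt_of_mem_sdiff_union hU hx.le_upper hg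
  refine sLU_eq_of_eq_mul_s12 (fun i hi => ((hU i).1 hi).1) hx.sum_eq
    (fun i hi => ((hU i).1 hi).2) (fun i hi => ?_)
    (sum_pos (fun i hi => hA i (mem_sdiff.1 hi).1) ⟨g, hg⟩).ne'
  obtain ⟨hiL, hiM⟩ := mem_sdiff_and_lt_of_mem_sdiff_union hU hx.le_upper hi
  rw [← hx.div_eq_div_of_lt_upper hAL hgL hiL hgM hiM, div_mul_cancel₀ _ (hAL i hiL).ne']

theorem sum_sdiff_union_le {Lt : Finset ι} {y : ι → ℝ} (hLt : Lt ⊆ H \ L)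
    (hxm : ∀ i ∈ Lt, x i ≤ m i) (hx : ∑ i ∈ H \ L, x i = n - ∑ i ∈ L, m i)
    (hy : ∑ i ∈ H \ (L ∪ Lt), y i = n - ∑ i ∈ L ∪ Lt, m i) :
    ∑ i ∈ H \ (L ∪ Lt), y i ≤ ∑ i ∈ H \ (L ∪ Lt), x i := by
  rw [hy, sum_union (disjoint_sdiff.mono_right hLt), ← sup_eq_union, ← sdiff_sdiff_left,
    sum_sdiff_eq_sub hLt, hx]
  linarith [sum_le_sum hxm]

end

end

theorem rnabox_s_monotone_general {ι : Type*} [DecidableEq ι] (H : Finset ι)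
    (A m M : ι → ℝ) (n : ℝ)
    (hA : ∀ h ∈ H, 0 < A h)
    (L : Finset ι)
    -- `x₂` is the (unique) optimal solution of Problem 2 on `H \ L` with budget `n − ∑_L m`:
    (x₂ : ι → ℝ)
    (hx₂pos : ∀ h ∈ H \ L, 0 < x₂ h)
    (hx₂sum : ∑ h ∈ H \ L, x₂ h = n - ∑ h ∈ L, m h)
    (hx₂le : ∀ h ∈ H \ L, x₂ h ≤ M h)
    (hx₂opt : ∀ y : ι → ℝ, (∀ h ∈ H \ L, 0 < y h) →
      (∑ h ∈ H \ L, y h = n - ∑ h ∈ L, m h) → (∀ h ∈ H \ L, y h ≤ M h) →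
      ∑ h ∈ H \ L, (A h) ^ 2 / x₂ h ≤ ∑ h ∈ H \ L, (A h) ^ 2 / y h)
    (U Lt : Finset ι)
    (hU : ∀ h, h ∈ U ↔ h ∈ H \ L ∧ x₂ h = M h)
    (hLt : ∀ h, h ∈ Lt ↔ h ∈ H \ (L ∪ U) ∧ x₂ h ≤ m h)
    (hLtne : Lt.Nonempty)
    (L' : Finset ι) (hL' : L' = L ∪ Lt)
    -- `x₃` is the (unique) optimal solution of Problem 2 on `H \ L'` with budget `n − ∑_{L'} m`:
    (x₃ : ι → ℝ)
    (hx₃pos : ∀ h ∈ H \ L', 0 < x₃ h)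
    (hx₃sum : ∑ h ∈ H \ L', x₃ h = n - ∑ h ∈ L', m h)
    (hx₃le : ∀ h ∈ H \ L', x₃ h ≤ M h)
    (hx₃opt : ∀ y : ι → ℝ, (∀ h ∈ H \ L', 0 < y h) →
      (∑ h ∈ H \ L', y h = n - ∑ h ∈ L', m h) → (∀ h ∈ H \ L', y h ≤ M h) →
      ∑ h ∈ H \ L', (A h) ^ 2 / x₃ h ≤ ∑ h ∈ H \ L', (A h) ^ 2 / y h)
    (U' : Finset ι)
    (hU' : ∀ h, h ∈ U' ↔ h ∈ H \ L' ∧ x₃ h = M h)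
    (hproper' : L' ∪ U' ⊂ H) :
    sLU H A m M n L U ≥ sLU H A m M n L' U' := by
  subst hL'
  obtain ⟨h₀, hh₀⟩ := hLtne
  obtain ⟨g₀, hg₀H, hg₀⟩ := exists_of_ssubset hproper'
  have hh₀' : h₀ ∈ H \ (L ∪ U) := ((hLt h₀).1 hh₀).1
  have hg₀' : g₀ ∈ H \ (L ∪ Lt ∪ U') := mem_sdiff.2 ⟨hg₀H, hg₀⟩
  have hx₂ : IsOptimalAllocation (H \ L) A M (n - ∑ h ∈ L, m h) x₂ :=
    ⟨hx₂pos, hx₂sum, hx₂le, hx₂opt⟩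
  have hx₃ : IsOptimalAllocation (H \ (L ∪ Lt)) A M (n - ∑ h ∈ L ∪ Lt, m h) x₃ :=
    ⟨hx₃pos, hx₃sum, hx₃le, hx₃opt⟩
  obtain ⟨hh₀L, hh₀M⟩ := mem_sdiff_and_lt_of_mem_sdiff_union hU hx₂le hh₀'
  obtain ⟨hg₀L, hg₀M⟩ := mem_sdiff_and_lt_of_mem_sdiff_union hU' hx₃le hg₀'
  have hLtL : Lt ⊆ H \ L := fun i hi =>
    sdiff_subset_sdiff le_rfl subset_union_left ((hLt i).1 hi).1
  have hAL : ∀ i ∈ H \ L, 0 < A i := fun i hi => hA i (mem_sdiff.1 hi).1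
  have hAL' : ∀ i ∈ H \ (L ∪ Lt), 0 < A i := fun i hi => hA i (mem_sdiff.1 hi).1
  rw [ge_iff_le, hx₂.sLU_eq hA hU hh₀', hx₃.sLU_eq hA hU' hg₀']
  refine le_of_sum_min_mul_le (M := M) hAL' hg₀L ?_ ?_
  · rw [div_mul_cancel₀ _ (hAL' g₀ hg₀L).ne']
    exact hg₀M.le
  · rw [← sum_congr rfl fun i hi => hx₃.eq_min_of_lt_upper hAL' hg₀L hg₀M hi,
      ← sum_congr rfl fun i hi => hx₂.eq_min_of_lt_upper hAL hh₀L hh₀M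
        (sdiff_subset_sdiff le_rfl subset_union_left hi)]
    exact sum_sdiff_union_le hLtL (fun i hi => ((hLt i).1 hi).2) hx₂sum hx₃sum

/-- One-step monotonicity of the values `s(L,U)` in the RNABOX iteration:
if `L' ∪ U' ⊊ H` then `s(L,U) ≥ s(L',U')`. -/
theorem rnabox_s_monotone {ι : Type*} [DecidableEq ι] (H : Finset ι) (hH : H.Nonempty)
    (A m M : ι → ℝ) (n : ℝ)
    (hA : ∀ h ∈ H, 0 < A h) (hm : ∀ h ∈ H, 0 < m h) (hmM : ∀ h ∈ H, m h < M h)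
    (hn₁ : ∑ h ∈ H, m h ≤ n) (hn₂ : n ≤ ∑ h ∈ H, M h)
    (L : Finset ι) (hLH : L ⊂ H)
    (hb₁ : 0 < n - ∑ h ∈ L, m h) (hb₂ : n - ∑ h ∈ L, m h ≤ ∑ h ∈ H \ L, M h)
    -- `x₂` is the (unique) optimal solution of Problem 2 on `H \ L` with budget `n − ∑_L m`:
    (x₂ : ι → ℝ)
    (hx₂pos : ∀ h ∈ H \ L, 0 < x₂ h)
    (hx₂sum : ∑ h ∈ H \ L, x₂ h = n - ∑ h ∈ L, m h)
    (hx₂le : ∀ h ∈ H \ L, x₂ h ≤ M h)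
    (hx₂opt : ∀ y : ι → ℝ, (∀ h ∈ H \ L, 0 < y h) →
      (∑ h ∈ H \ L, y h = n - ∑ h ∈ L, m h) → (∀ h ∈ H \ L, y h ≤ M h) →
      ∑ h ∈ H \ L, (A h) ^ 2 / x₂ h ≤ ∑ h ∈ H \ L, (A h) ^ 2 / y h)
    (U Lt : Finset ι)
    (hU : ∀ h, h ∈ U ↔ h ∈ H \ L ∧ x₂ h = M h)
    (hLt : ∀ h, h ∈ Lt ↔ h ∈ H \ (L ∪ U) ∧ x₂ h ≤ m h)
    (hLtne : Lt.Nonempty)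
    (L' : Finset ι) (hL' : L' = L ∪ Lt)
    (hb₁' : 0 < n - ∑ h ∈ L', m h) (hb₂' : n - ∑ h ∈ L', m h ≤ ∑ h ∈ H \ L', M h)
    -- `x₃` is the (unique) optimal solution of Problem 2 on `H \ L'` with budget `n − ∑_{L'} m`:
    (x₃ : ι → ℝ)
    (hx₃pos : ∀ h ∈ H \ L', 0 < x₃ h)
    (hx₃sum : ∑ h ∈ H \ L', x₃ h = n - ∑ h ∈ L', m h)
    (hx₃le : ∀ h ∈ H \ L', x₃ h ≤ M h)
    (hx₃opt : ∀ y : ι → ℝ, (∀ h ∈ H \ L', 0 < y h) →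
      (∑ h ∈ H \ L', y h = n - ∑ h ∈ L', m h) → (∀ h ∈ H \ L', y h ≤ M h) →
      ∑ h ∈ H \ L', (A h) ^ 2 / x₃ h ≤ ∑ h ∈ H \ L', (A h) ^ 2 / y h)
    (U' : Finset ι)
    (hU' : ∀ h, h ∈ U' ↔ h ∈ H \ L' ∧ x₃ h = M h)
    (hproper' : L' ∪ U' ⊂ H) :
    sLU H A m M n L U ≥ sLU H A m M n L' U' :=
  rnabox_s_monotone_general H A m M n hA L x₂ hx₂pos hx₂sum hx₂le hx₂opt U Lt hU hLt hLtne L' hL' x₃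
    hx₃pos hx₃sum hx₃le hx₃opt U' hU' hproper'
end

section
/- (Correctness of the RNABOX algorithm.) Define recursively L_1 = ∅ and, for r ≥ 1 with L_r ⊊ H: the Problem 2 on index set H\L_r with budget n − ∑_{h∈L_r} m_h is feasible (its budget is positive and at most ∑_{h∈H\L_r} M_h); let x^{(r)} be its unique optimal solution, U_r = {h ∈ H\L_r : x^{(r)}_h = M_h}, L̃_r = {h ∈ H\(L_r ∪ U_r) : x^{(r)}_h ≤ m_h}, and L_{r+1} = L_r ∪ L̃_r. Then the recursion is well defined (each interim Problem 2 is feasible), there exists an iteration r* ≤ |H| + 1 with L̃_{r*} = ∅, and the vector x* defined by x*_h = m_h for h ∈ L_{r*} and x*_h = x^{(r*)}_h for h ∈ H\L_{r*} is the unique optimal solution of Problem 1. -/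
/-!
Both problems are convex, so a feasible point is optimal as soon as it satisfies the KKT
conditions for some multiplier `c` of the budget constraint, i.e.
`(A h ^ 2 - c ^ 2 * x h ^ 2) * (x h - y h) ≥ 0` for every feasible `y`; strict convexity of
`A² / x` makes it the unique optimum. The solution of Problem 2 is therefore `min (M, A / c)` for
a multiplier `c` exhausting the budget. Along RNABOX these multipliers increase, so a stratum
sent to its lower bound (`A / c ≤ m`) stays below it in all later rounds, and the budget left
for the others remains attainable. Every round that fixes a new stratum enlarges `L`, so after at
most `|H| + 1` rounds none is fixed; then `m` on `L` and `min (M, A / c)` off `L` satisfy the KKT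
conditions of Problem 1 with the last multiplier `c`.
-/

open Finset

section Lagrange

lemma mul_sub_add_le_sq_div_sub_sq_div {a x y c : ℝ} (hx : 0 < x) (hy : 0 < y)
    (hlag : 0 ≤ (a ^ 2 - c ^ 2 * x ^ 2) * (x - y)) :
    c ^ 2 * (x - y) + a ^ 2 * (x - y) ^ 2 / (x ^ 2 * y) ≤ a ^ 2 / y - a ^ 2 / x := by
  have key : a ^ 2 / y - a ^ 2 / x - (c ^ 2 * (x - y) + a ^ 2 * (x - y) ^ 2 / (x ^ 2 * y)) =
      (a ^ 2 - c ^ 2 * x ^ 2) * (x - y) / x ^ 2 := by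
    field_simp
    ring
  have : 0 ≤ (a ^ 2 - c ^ 2 * x ^ 2) * (x - y) / x ^ 2 := by positivity
  linarith

variable {ι : Type*} {S : Finset ι} {a x y : ι → ℝ} {c : ℝ}

lemma sum_sq_mul_sub_sq_div_le_of_lagrange (hx : ∀ h ∈ S, 0 < x h) (hy : ∀ h ∈ S, 0 < y h)
    (hsum : ∑ h ∈ S, x h = ∑ h ∈ S, y h)
    (hlag : ∀ h ∈ S, 0 ≤ (a h ^ 2 - c ^ 2 * x h ^ 2) * (x h - y h)) :
    ∑ h ∈ S, a h ^ 2 * (x h - y h) ^ 2 / (x h ^ 2 * y h) ≤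
      ∑ h ∈ S, a h ^ 2 / y h - ∑ h ∈ S, a h ^ 2 / x h := by
  have hmult : ∑ h ∈ S, c ^ 2 * (x h - y h) = 0 := by
    rw [← mul_sum, sum_sub_distrib, hsum, sub_self, mul_zero]
  calc ∑ h ∈ S, a h ^ 2 * (x h - y h) ^ 2 / (x h ^ 2 * y h)
      = ∑ h ∈ S, (c ^ 2 * (x h - y h) + a h ^ 2 * (x h - y h) ^ 2 / (x h ^ 2 * y h)) := by
        rw [sum_add_distrib, hmult, zero_add]
    _ ≤ ∑ h ∈ S, (a h ^ 2 / y h - a h ^ 2 / x h) :=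
        sum_le_sum fun h hh => mul_sub_add_le_sq_div_sub_sq_div (hx h hh) (hy h hh) (hlag h hh)
    _ = ∑ h ∈ S, a h ^ 2 / y h - ∑ h ∈ S, a h ^ 2 / x h := sum_sub_distrib _ _

lemma sum_sq_div_le_of_lagrange (hx : ∀ h ∈ S, 0 < x h) (hy : ∀ h ∈ S, 0 < y h)
    (hsum : ∑ h ∈ S, x h = ∑ h ∈ S, y h)
    (hlag : ∀ h ∈ S, 0 ≤ (a h ^ 2 - c ^ 2 * x h ^ 2) * (x h - y h)) :
    ∑ h ∈ S, a h ^ 2 / x h ≤ ∑ h ∈ S, a h ^ 2 / y h := by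
  have hgap := sum_sq_mul_sub_sq_div_le_of_lagrange hx hy hsum hlag
  have : 0 ≤ ∑ h ∈ S, a h ^ 2 * (x h - y h) ^ 2 / (x h ^ 2 * y h) :=
    sum_nonneg fun h hh => by have := hy h hh; positivity
  linarith

lemma eq_of_lagrange_of_sum_sq_div_le (hx : ∀ h ∈ S, 0 < x h) (hy : ∀ h ∈ S, 0 < y h)
    (hsum : ∑ h ∈ S, x h = ∑ h ∈ S, y h)
    (hlag : ∀ h ∈ S, 0 ≤ (a h ^ 2 - c ^ 2 * x h ^ 2) * (x h - y h)) (ha : ∀ h ∈ S, a h ≠ 0)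
    (hle : ∑ h ∈ S, a h ^ 2 / y h ≤ ∑ h ∈ S, a h ^ 2 / x h) :
    ∀ h ∈ S, y h = x h := by
  have hgap := sum_sq_mul_sub_sq_div_le_of_lagrange hx hy hsum hlag
  have hnonneg : ∀ h ∈ S, 0 ≤ a h ^ 2 * (x h - y h) ^ 2 / (x h ^ 2 * y h) :=
    fun h hh => by have := hy h hh; positivity
  have hzero := (sum_eq_zero_iff_of_nonneg hnonneg).1 (le_antisymm (by linarith) (sum_nonneg hnonneg))
  intro h hh
  have := hzero h hh
  simp only [div_eq_zero_iff, mul_eq_zero, pow_eq_zero_iff two_ne_zero, ha h hh, (hx h hh).ne',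
    (hy h hh).ne', sub_eq_zero, false_or, or_false] at this
  exact this.symm

lemma lagrange_of_le_mul {a c m y : ℝ} (ha : 0 ≤ a) (hac : a ≤ c * m) (hy : m ≤ y) :
    0 ≤ (a ^ 2 - c ^ 2 * m ^ 2) * (m - y) :=
  mul_nonneg_of_nonpos_of_nonpos (by nlinarith) (by linarith)

end Lagrange

/-- The optimal allocation of Problem 2 at Lagrange multiplier `c`. -/
noncomputable def capAlloc {ι : Type*} (A M : ι → ℝ) (c : ℝ) (h : ι) : ℝ := min (M h) (A h / c)

section CapAlloc

variable {ι : Type*} {A M : ι → ℝ} {c : ℝ} {h : ι}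

lemma capAlloc_pos (hA : 0 < A h) (hM : 0 < M h) (hc : 0 < c) : 0 < capAlloc A M c h :=
  lt_min hM (div_pos hA hc)

lemma capAlloc_le : capAlloc A M c h ≤ M h := min_le_left _ _

lemma capAlloc_eq_div_of_ne (hne : capAlloc A M c h ≠ M h) : capAlloc A M c h = A h / c :=
  (min_choice _ _).resolve_left hne

lemma lagrange_capAlloc {y : ℝ} (hc : 0 < c) (hM : 0 ≤ M h) (hy : y ≤ M h) :
    0 ≤ (A h ^ 2 - c ^ 2 * capAlloc A M c h ^ 2) * (capAlloc A M c h - y) := by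
  rcases le_total (M h) (A h / c) with hle | hle
  · rw [capAlloc, min_eq_left hle]
    have hcM : c * M h ≤ A h := by rwa [le_div_iff₀ hc, mul_comm] at hle
    have : (c * M h) ^ 2 ≤ A h ^ 2 := pow_le_pow_left₀ (by positivity) hcM 2
    exact mul_nonneg (by nlinarith) (by linarith)
  · have : A h ^ 2 - c ^ 2 * (A h / c) ^ 2 = 0 := by
      field_simp
      ring
    rw [capAlloc, min_eq_right hle, this, zero_mul]

lemma exists_sum_capAlloc_eq {J : Finset ι} {b c₀ : ℝ} (hc₀ : 0 < c₀) (hb : 0 < b)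
    (hle : b ≤ ∑ h ∈ J, capAlloc A M c₀ h) :
    ∃ c, c₀ ≤ c ∧ ∑ h ∈ J, capAlloc A M c h = b := by
  set C := max c₀ ((∑ h ∈ J, A h) / b)
  have hC : 0 < C := hc₀.trans_le (le_max_left _ _)
  have hge : ∑ h ∈ J, capAlloc A M C h ≤ b :=
    calc ∑ h ∈ J, capAlloc A M C h ≤ ∑ h ∈ J, A h / C := sum_le_sum fun h _ => min_le_right _ _
      _ = (∑ h ∈ J, A h) / C := (sum_div _ _ _).symm
      _ ≤ b := by
        rw [div_le_iff₀ hC, ← div_le_iff₀' hb]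
        exact le_max_right _ _
  have hcont : ContinuousOn (fun c => ∑ h ∈ J, capAlloc A M c h) (Set.Icc c₀ C) :=
    continuousOn_finsetSum _ fun h _ => (continuous_const.min continuous_id).comp_continuousOn
      (continuousOn_const.div continuousOn_id fun c hc => (hc₀.trans_le hc.1).ne')
  obtain ⟨c, hc, hcb⟩ := intermediate_value_Icc' (le_max_left _ _) hcont ⟨hge, hle⟩
  exact ⟨c, hc.1, hcb⟩

end CapAlloc

section Rnabox

variable {ι : Type*} [DecidableEq ι] (H : Finset ι) (A m M : ι → ℝ) (n : ℝ)

noncomputable def takeMax (L : Finset ι) (x : ι → ℝ) : Finset ι := {h ∈ H \ L | x h = M h}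

noncomputable def takeMin (L : Finset ι) (x : ι → ℝ) : Finset ι :=
  {h ∈ H \ (L ∪ takeMax H M L x) | x h ≤ m h}

open Classical in
/-- The multiplier at which `capAlloc` exhausts the budget left for `H \ L`, taken above the
previous multiplier `c₀` (the fallback `c₀` is never reached along a run). -/
noncomputable def roundMult (L : Finset ι) (c₀ : ℝ) : ℝ :=
  if hc : ∃ c, c₀ ≤ c ∧ ∑ h ∈ H \ L, capAlloc A M c h = n - ∑ h ∈ L, m h then hc.choose else c₀

/-- After `k` rounds: the set `L_{k+1}` of the paper, and the multiplier of round `k`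
(for `k = 0`, the initial lower bound `c₀` on all multipliers). -/
noncomputable def rnaboxState (c₀ : ℝ) : ℕ → Finset ι × ℝ
  | 0 => (∅, c₀)
  | k + 1 =>
    let c := roundMult H A m M n (rnaboxState c₀ k).1 (rnaboxState c₀ k).2
    ((rnaboxState c₀ k).1 ∪ takeMin H m M (rnaboxState c₀ k).1 (capAlloc A M c), c)

structure RoundInv (L : Finset ι) (c : ℝ) : Prop where
  subset : L ⊆ H
  pos : 0 < c
  le_mul : ∀ h ∈ L, A h ≤ c * m h
  budget_le : n - ∑ h ∈ L, m h ≤ ∑ h ∈ H \ L, capAlloc A M c h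

def IsProblem2Solution (J : Finset ι) (b : ℝ) (x : ι → ℝ) : Prop :=
  0 < b ∧ b ≤ ∑ h ∈ J, M h ∧ (∀ h ∈ J, 0 < x h) ∧ (∑ h ∈ J, x h = b) ∧ (∀ h ∈ J, x h ≤ M h) ∧
    ∀ y : ι → ℝ, (∀ h ∈ J, 0 < y h) → (∑ h ∈ J, y h = b) → (∀ h ∈ J, y h ≤ M h) →
      ∑ h ∈ J, (A h) ^ 2 / x h ≤ ∑ h ∈ J, (A h) ^ 2 / y h

def IsUniqueProblem1Solution (x : ι → ℝ) : Prop :=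
  Feas1 H m M n x ∧ (∀ y, Feas1 H m M n y → obj H A x ≤ obj H A y) ∧
    ∀ y, Feas1 H m M n y → (∀ z, Feas1 H m M n z → obj H A y ≤ obj H A z) → ∀ h ∈ H, y h = x h

variable {H A m M n}

lemma mem_takeMin {L : Finset ι} {x : ι → ℝ} {h : ι} :
    h ∈ takeMin H m M L x ↔ h ∈ H \ L ∧ x h ≠ M h ∧ x h ≤ m h := by
  simp only [takeMin, takeMax, mem_filter, mem_sdiff, mem_union]
  tauto

lemma takeMin_subset (L : Finset ι) (x : ι → ℝ) : takeMin H m M L x ⊆ H \ L :=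
  fun _ hh => (mem_takeMin.1 hh).1

lemma disjoint_takeMin (L : Finset ι) (x : ι → ℝ) : Disjoint L (takeMin H m M L x) :=
  disjoint_of_subset_right (takeMin_subset L x) disjoint_sdiff

lemma sub_sum_pos_of_sdiff_nonempty {L : Finset ι} (hL : L ⊆ H) (hJ : (H \ L).Nonempty)
    (hm : ∀ h ∈ H, 0 < m h) (hn : ∑ h ∈ H, m h ≤ n) : 0 < n - ∑ h ∈ L, m h := by
  have hsplit := sum_sdiff hL (f := m)
  have := sum_pos (fun h hh => hm h (mem_sdiff.1 hh).1) hJ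
  linarith

namespace RoundInv

variable {L : Finset ι} {c₀ : ℝ}

lemma roundMult_spec (hinv : RoundInv H A m M n L c₀) (hm : ∀ h ∈ H, 0 < m h)
    (hn₁ : ∑ h ∈ H, m h ≤ n) :
    c₀ ≤ roundMult H A m M n L c₀ ∧
      ∑ h ∈ H \ L, capAlloc A M (roundMult H A m M n L c₀) h = n - ∑ h ∈ L, m h := by
  have hex : ∃ c, c₀ ≤ c ∧ ∑ h ∈ H \ L, capAlloc A M c h = n - ∑ h ∈ L, m h := by
    rcases (H \ L).eq_empty_or_nonempty with hJ | hJ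
    · have hLH : L = H := hinv.subset.antisymm (sdiff_eq_empty_iff_subset.1 hJ)
      have := hinv.budget_le
      refine ⟨c₀, le_rfl, ?_⟩
      rw [hJ, sum_empty] at this ⊢
      subst hLH
      linarith
    · exact exists_sum_capAlloc_eq hinv.pos
        (sub_sum_pos_of_sdiff_nonempty hinv.subset hJ hm hn₁) hinv.budget_le
  rw [roundMult, dif_pos hex]
  exact hex.choose_spec

lemma next (hinv : RoundInv H A m M n L c₀) (hm : ∀ h ∈ H, 0 < m h)
    (hn₁ : ∑ h ∈ H, m h ≤ n) :
    RoundInv H A m M n (L ∪ takeMin H m M L (capAlloc A M (roundMult H A m M n L c₀)))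
      (roundMult H A m M n L c₀) := by
  obtain ⟨hc₀, hsum⟩ := hinv.roundMult_spec hm hn₁
  set c := roundMult H A m M n L c₀
  set T := takeMin H m M L (capAlloc A M c)
  have hc : 0 < c := hinv.pos.trans_le hc₀
  have hT : T ⊆ H \ L := takeMin_subset L _
  refine ⟨union_subset hinv.subset (hT.trans sdiff_subset), hc, fun h hh => ?_, ?_⟩
  · rcases mem_union.1 hh with hL | hTh
    · exact (hinv.le_mul h hL).trans
        (mul_le_mul_of_nonneg_right hc₀ (hm h (hinv.subset hL)).le)
    · obtain ⟨-, hne, hle⟩ := mem_takeMin.1 hTh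
      rw [capAlloc_eq_div_of_ne hne, div_le_iff₀ hc] at hle
      linarith
  · have hTm : ∑ h ∈ T, capAlloc A M c h ≤ ∑ h ∈ T, m h :=
      sum_le_sum fun h hh => (mem_takeMin.1 hh).2.2
    have hdiff : H \ (L ∪ T) = (H \ L) \ T := sdiff_sdiff_left.symm
    rw [sum_union (disjoint_takeMin L _), hdiff, sum_sdiff_eq_sub hT]
    linarith

lemma isProblem2Solution (hinv : RoundInv H A m M n L c₀) (hA : ∀ h ∈ H, 0 < A h)
    (hm : ∀ h ∈ H, 0 < m h) (hmM : ∀ h ∈ H, m h < M h) (hn₁ : ∑ h ∈ H, m h ≤ n) (hL : L ≠ H) :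
    IsProblem2Solution A M (H \ L) (n - ∑ h ∈ L, m h)
      (capAlloc A M (roundMult H A m M n L c₀)) := by
  obtain ⟨hc₀, hsum⟩ := hinv.roundMult_spec hm hn₁
  have hc : 0 < roundMult H A m M n L c₀ := hinv.pos.trans_le hc₀
  have hJ : (H \ L).Nonempty :=
    sdiff_nonempty.2 fun hHL => hL (hinv.subset.antisymm hHL)
  have hMpos : ∀ h ∈ H \ L, 0 < M h := fun h hh =>
    (hm h (mem_sdiff.1 hh).1).trans (hmM h (mem_sdiff.1 hh).1)
  have hpos : ∀ h ∈ H \ L, 0 < capAlloc A M (roundMult H A m M n L c₀) h := fun h hh =>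
    capAlloc_pos (hA h (mem_sdiff.1 hh).1) (hMpos h hh) hc
  refine ⟨sub_sum_pos_of_sdiff_nonempty hinv.subset hJ hm hn₁,
    hsum ▸ sum_le_sum fun h _ => capAlloc_le, hpos, hsum, fun h _ => capAlloc_le,
    fun y hy hysum hyM => sum_sq_div_le_of_lagrange hpos hy (hsum.trans hysum.symm)
      fun h hh => lagrange_capAlloc hc (hMpos h hh).le (hyM h hh)⟩

lemma isUniqueProblem1Solution (hinv : RoundInv H A m M n L c₀) (hA : ∀ h ∈ H, 0 < A h)
    (hm : ∀ h ∈ H, 0 < m h) (hmM : ∀ h ∈ H, m h < M h) (hn₁ : ∑ h ∈ H, m h ≤ n)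
    (hT : takeMin H m M L (capAlloc A M (roundMult H A m M n L c₀)) = ∅) :
    IsUniqueProblem1Solution H A m M n
      (fun h => if h ∈ L then m h else capAlloc A M (roundMult H A m M n L c₀) h) := by
  obtain ⟨hc₀, hsum⟩ := hinv.roundMult_spec hm hn₁
  set c := roundMult H A m M n L c₀
  set x := fun h => if h ∈ L then m h else capAlloc A M c h
  have hc : 0 < c := hinv.pos.trans_le hc₀
  have hMpos : ∀ h ∈ H, 0 < M h := fun h hh => (hm h hh).trans (hmM h hh)
  have hfeas : Feas1 H m M n x := by
    refine ⟨fun h hh => ?_, ?_, fun h hh => ?_⟩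
    · by_cases hL : h ∈ L
      · simpa [x, hL] using hm h hh
      · simpa [x, hL] using capAlloc_pos (hA h hh) (hMpos h hh) hc
    · rw [← sum_sdiff hinv.subset, sum_congr rfl fun h hh => if_neg (mem_sdiff.1 hh).2,
        sum_congr rfl fun h hh => if_pos hh, hsum, sub_add_cancel]
    · by_cases hL : h ∈ L
      · simpa [x, hL] using (hmM h hh).le
      · simp only [x, hL, if_false]
        refine ⟨?_, capAlloc_le⟩
        by_cases hmax : capAlloc A M c h = M h
        · exact hmax ▸ (hmM h hh).le
        · by_contra! hlt
          have : h ∈ takeMin H m M L (capAlloc A M c) :=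
            mem_takeMin.2 ⟨mem_sdiff.2 ⟨hh, hL⟩, hmax, hlt.le⟩
          simp [hT] at this
  have hlag : ∀ y, Feas1 H m M n y →
      ∀ h ∈ H, 0 ≤ (A h ^ 2 - c ^ 2 * x h ^ 2) * (x h - y h) := by
    intro y hy h hh
    by_cases hL : h ∈ L
    · simp only [x, hL, if_true]
      exact lagrange_of_le_mul (hA h hh).le
        ((hinv.le_mul h hL).trans (mul_le_mul_of_nonneg_right hc₀ (hm h hh).le)) (hy.2.2 h hh).1
    · simp only [x, hL, if_false]
      exact lagrange_capAlloc hc (hMpos h hh).le (hy.2.2 h hh).2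
  exact ⟨hfeas,
    fun y hy => sum_sq_div_le_of_lagrange hfeas.1 hy.1 (hfeas.2.1.trans hy.2.1.symm) (hlag y hy),
    fun y hy hopt => eq_of_lagrange_of_sum_sq_div_le hfeas.1 hy.1 (hfeas.2.1.trans hy.2.1.symm)
      (hlag y hy) (fun h hh => (hA h hh).ne') (hopt x hfeas)⟩

end RoundInv

lemma roundInv_empty (hH : H.Nonempty) (hA : ∀ h ∈ H, 0 < A h) (hm : ∀ h ∈ H, 0 < m h)
    (hmM : ∀ h ∈ H, m h < M h) (hn₂ : n ≤ ∑ h ∈ H, M h) :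
    RoundInv H A m M n ∅ (H.inf' hH fun h => A h / M h) := by
  have hMpos : ∀ h ∈ H, 0 < M h := fun h hh => (hm h hh).trans (hmM h hh)
  have hc : 0 < H.inf' hH fun h => A h / M h :=
    (lt_inf'_iff hH).2 fun h hh => div_pos (hA h hh) (hMpos h hh)
  have hcap : ∀ h ∈ H, capAlloc A M (H.inf' hH fun h => A h / M h) h = M h := fun h hh =>
    min_eq_left <| (le_div_iff₀ hc).2 <| by
      rw [mul_comm]
      exact (le_div_iff₀ (hMpos h hh)).1 (inf'_le _ hh)
  refine ⟨empty_subset H, hc, by simp, ?_⟩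
  rw [sum_empty, sub_zero, sdiff_empty, sum_congr rfl hcap]
  exact hn₂

lemma roundInv_rnaboxState {c₀ : ℝ} (h₀ : RoundInv H A m M n ∅ c₀) (hm : ∀ h ∈ H, 0 < m h)
    (hn₁ : ∑ h ∈ H, m h ≤ n) :
    ∀ k, RoundInv H A m M n (rnaboxState H A m M n c₀ k).1 (rnaboxState H A m M n c₀ k).2
  | 0 => h₀
  | k + 1 => (roundInv_rnaboxState h₀ hm hn₁ k).next hm hn₁

lemma exists_takeMin_rnaboxState_eq_empty {c₀ : ℝ}
    (hsub : ∀ k, (rnaboxState H A m M n c₀ k).1 ⊆ H) :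
    ∃ k ≤ #H, takeMin H m M (rnaboxState H A m M n c₀ k).1
      (capAlloc A M (rnaboxState H A m M n c₀ (k + 1)).2) = ∅ := by
  by_contra! hne
  have hcard : ∀ k ≤ #H + 1, k ≤ #(rnaboxState H A m M n c₀ k).1 := by
    intro k
    induction k with
    | zero => simp
    | succ k ih =>
      intro hk
      have hunion : #(rnaboxState H A m M n c₀ (k + 1)).1 =
          #(rnaboxState H A m M n c₀ k).1 + #(takeMin H m M (rnaboxState H A m M n c₀ k).1
            (capAlloc A M (rnaboxState H A m M n c₀ (k + 1)).2)) :=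
        card_union_of_disjoint (disjoint_takeMin _ _)
      have hpos := (hne k (by omega)).card_pos
      have := ih (by omega)
      omega
  have hle := card_le_card (hsub (#H + 1))
  have hge := hcard (#H + 1) le_rfl
  omega

end Rnabox

/-- Correctness of the RNABOX algorithm: the recursion
`L 1 = ∅`, `L (r+1) = L r ∪ L̃ r` (with `x r` the unique optimal solution of the interim
one-sided Problem 2 on `H \ L r` with budget `n − ∑_{L r} m`,
`U r = {h ∈ H \ L r : x r h = M h}` and `L̃ r = {h ∈ H \ (L r ∪ U r) : x r h ≤ m h}`)
is well defined (each interim Problem 2 with `L r ⊊ H` is feasible), terminates at some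
`r* ≤ |H| + 1` with `L̃ r* = ∅`, and the assembled vector (`m` on `L r*`, `x r*` elsewhere)
is the unique optimal solution of Problem 1. -/
theorem rnabox_correct {ι : Type*} [DecidableEq ι] (H : Finset ι) (hH : H.Nonempty)
    (A m M : ι → ℝ) (n : ℝ)
    (hA : ∀ h ∈ H, 0 < A h) (hm : ∀ h ∈ H, 0 < m h) (hmM : ∀ h ∈ H, m h < M h)
    (hn₁ : ∑ h ∈ H, m h ≤ n) (hn₂ : n ≤ ∑ h ∈ H, M h) :
    ∃ (L U Lt : ℕ → Finset ι) (x : ℕ → ι → ℝ) (r : ℕ),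
      1 ≤ r ∧ r ≤ H.card + 1 ∧
      L 1 = ∅ ∧
      (∀ i, 1 ≤ i → i ≤ r → L i ⊆ H) ∧
      -- each interim Problem 2 is feasible and `x i` is its optimal solution:
      (∀ i, 1 ≤ i → i ≤ r → L i ≠ H →
        0 < n - ∑ h ∈ L i, m h ∧
        n - ∑ h ∈ L i, m h ≤ ∑ h ∈ H \ L i, M h ∧
        (∀ h ∈ H \ L i, 0 < x i h) ∧
        (∑ h ∈ H \ L i, x i h = n - ∑ h ∈ L i, m h) ∧
        (∀ h ∈ H \ L i, x i h ≤ M h) ∧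
        (∀ y : ι → ℝ, (∀ h ∈ H \ L i, 0 < y h) →
          (∑ h ∈ H \ L i, y h = n - ∑ h ∈ L i, m h) → (∀ h ∈ H \ L i, y h ≤ M h) →
          ∑ h ∈ H \ L i, (A h) ^ 2 / x i h ≤ ∑ h ∈ H \ L i, (A h) ^ 2 / y h)) ∧
      -- the take-max and take-min candidate sets:
      (∀ i, ∀ h, h ∈ U i ↔ h ∈ H \ L i ∧ x i h = M h) ∧
      (∀ i, ∀ h, h ∈ Lt i ↔ h ∈ H \ (L i ∪ U i) ∧ x i h ≤ m h) ∧
      -- the recursion: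
      (∀ i, 1 ≤ i → i < r → L (i + 1) = L i ∪ Lt i) ∧
      -- termination:
      Lt r = ∅ ∧
      -- the assembled allocation solves Problem 1 and is its unique optimal solution:
      Feas1 H m M n (fun h => if h ∈ L r then m h else x r h) ∧
      (∀ y, Feas1 H m M n y →
        obj H A (fun h => if h ∈ L r then m h else x r h) ≤ obj H A y) ∧
      (∀ y, Feas1 H m M n y → (∀ z, Feas1 H m M n z → obj H A y ≤ obj H A z) →
        ∀ h ∈ H, y h = if h ∈ L r then m h else x r h) := by
  set s := rnaboxState H A m M n (H.inf' hH fun h => A h / M h)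
  have hinv := roundInv_rnaboxState (roundInv_empty hH hA hm hmM hn₂) hm hn₁
  obtain ⟨k, hk, hT⟩ := exists_takeMin_rnaboxState_eq_empty fun k => (hinv k).subset
  refine ⟨fun i => (s (i - 1)).1, fun i => takeMax H M (s (i - 1)).1 (capAlloc A M (s i).2),
    fun i => takeMin H m M (s (i - 1)).1 (capAlloc A M (s i).2), fun i => capAlloc A M (s i).2,
    k + 1, by omega, by omega, rfl, fun i _ _ => (hinv _).subset, fun i hi _ hL => ?_,
    fun _ _ => mem_filter, fun _ _ => mem_filter, fun i hi _ => ?_, hT,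
    (hinv k).isUniqueProblem1Solution hA hm hmM hn₁ hT⟩
  · obtain ⟨j, rfl⟩ := Nat.exists_eq_add_of_le' hi
    exact (hinv j).isProblem2Solution hA hm hmM hn₁ hL
  · obtain ⟨j, rfl⟩ := Nat.exists_eq_add_of_le' hi
    rfl
end
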